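/- arXiv:1801.09890 — 6 statements merged into one kernel-verified Lean document; each statement's English description precedes it below -/
import Mathlib

section
/- Let (N, g, J, ∇, ∇*) be a Kaehler statistical manifold with fundamental 2-form Ω(X,Y) = g(JX,Y) and difference tensor K. Then the following three conditions are equivalent: (1) ∇Ω = 0; (2) K_X(JY) + J(K_X Y) = 0 for all vector fields X, Y (i.e. N is a holomorphic statistical manifold); (3) ∇*Ω = 0. -/
/-!
An algebraic model of the calculus of vector fields on a smooth manifold:
`F` plays the role of the commutative `ℝ`-algebra of smooth functions and `V`
plays the role of the `F`-module of smooth vector fields, equipped with the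
directional derivative `D` (so `D X f` is the function `X f`), the Lie bracket,
a Riemannian metric `g`, a pair of conjugate (dual) torsion-free affine
connections `conn` (`∇`) and `connD` (`∇*`), and the Levi-Civita connection
`conn0` (`∇⁰`) of `g`.  This is exactly the data of a statistical manifold
`(M, g, ∇, ∇*)`.
-/
structure StatisticalManifold (F V : Type*) [CommRing F] [Algebra ℝ F]
    [AddCommGroup V] [Module F V] [Module ℝ V] [IsScalarTower ℝ F V] where
  /-- the directional derivative `X f` of a function `f` along a vector field `X` -/
  D : V → F → F
  /-- the Lie bracket of vector fields -/
  bracket : V → V → V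
  /-- the Riemannian metric -/
  g : V → V → F
  /-- the affine connection `∇` -/
  conn : V → V → V
  /-- the conjugate (dual) affine connection `∇*` -/
  connD : V → V → V
  /-- the Levi-Civita connection `∇⁰` of `g` -/
  conn0 : V → V → V
  D_add_left : ∀ X Y f, D (X + Y) f = D X f + D Y f
  D_smul_left : ∀ (a : F) (X : V) (f : F), D (a • X) f = a * D X f
  D_add_right : ∀ (X : V) (f₁ f₂ : F), D X (f₁ + f₂) = D X f₁ + D X f₂
  D_mul_right : ∀ (X : V) (f₁ f₂ : F), D X (f₁ * f₂) = f₁ * D X f₂ + f₂ * D X f₁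
  D_bracket : ∀ X Y f, D (bracket X Y) f = D X (D Y f) - D Y (D X f)
  g_symm : ∀ X Y, g X Y = g Y X
  g_add_left : ∀ X Y Z, g (X + Y) Z = g X Z + g Y Z
  g_smul_left : ∀ (a : F) (X Y : V), g (a • X) Y = a * g X Y
  g_nondeg : ∀ X, (∀ Y, g X Y = 0) → X = 0
  conn_add_left : ∀ X Y Z, conn (X + Y) Z = conn X Z + conn Y Z
  conn_smul_left : ∀ (a : F) (X Y : V), conn (a • X) Y = a • conn X Y
  conn_add_right : ∀ X Y Z, conn X (Y + Z) = conn X Y + conn X Z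
  conn_leibniz : ∀ (a : F) (X Y : V), conn X (a • Y) = D X a • Y + a • conn X Y
  connD_add_left : ∀ X Y Z, connD (X + Y) Z = connD X Z + connD Y Z
  connD_smul_left : ∀ (a : F) (X Y : V), connD (a • X) Y = a • connD X Y
  connD_add_right : ∀ X Y Z, connD X (Y + Z) = connD X Y + connD X Z
  connD_leibniz : ∀ (a : F) (X Y : V), connD X (a • Y) = D X a • Y + a • connD X Y
  conn0_add_left : ∀ X Y Z, conn0 (X + Y) Z = conn0 X Z + conn0 Y Z
  conn0_smul_left : ∀ (a : F) (X Y : V), conn0 (a • X) Y = a • conn0 X Y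
  conn0_add_right : ∀ X Y Z, conn0 X (Y + Z) = conn0 X Y + conn0 X Z
  conn0_leibniz : ∀ (a : F) (X Y : V), conn0 X (a • Y) = D X a • Y + a • conn0 X Y
  /-- `∇` is torsion free -/
  conn_torsion_free : ∀ X Y, conn X Y - conn Y X = bracket X Y
  /-- `∇*` is torsion free -/
  connD_torsion_free : ∀ X Y, connD X Y - connD Y X = bracket X Y
  /-- `∇⁰` is torsion free -/
  conn0_torsion_free : ∀ X Y, conn0 X Y - conn0 Y X = bracket X Y
  /-- the duality (conjugacy) relation `Z g(X,Y) = g(∇_Z X, Y) + g(X, ∇*_Z Y)` -/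
  duality : ∀ X Y Z, D Z (g X Y) = g (conn Z X) Y + g X (connD Z Y)
  /-- `∇⁰` is metric: `Z g(X,Y) = g(∇⁰_Z X, Y) + g(X, ∇⁰_Z Y)` -/
  conn0_metric : ∀ X Y Z, D Z (g X Y) = g (conn0 Z X) Y + g X (conn0 Z Y)

namespace StatisticalManifold

variable {F V : Type*} [CommRing F] [Algebra ℝ F]
  [AddCommGroup V] [Module F V] [Module ℝ V] [IsScalarTower ℝ F V]

/-- The difference tensor `K_X Y = ∇_X Y - ∇⁰_X Y`. -/
def K (M : StatisticalManifold F V) (X Y : V) : V := M.conn X Y - M.conn0 X Y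

end StatisticalManifold

/-- An almost Hermitian statistical manifold `(N, g, J, ∇, ∇*)`: a statistical
manifold together with an almost complex structure `J` (a `(1,1)`-tensor field
with `J² = -Id`) compatible with the metric. -/
structure AlmostHermitianStatManifold (F V : Type*) [CommRing F] [Algebra ℝ F]
    [AddCommGroup V] [Module F V] [Module ℝ V] [IsScalarTower ℝ F V]
    extends StatisticalManifold F V where
  /-- the almost complex structure -/
  J : V → V
  J_add : ∀ X Y, J (X + Y) = J X + J Y
  J_smul : ∀ (a : F) (X : V), J (a • X) = a • J X
  J_sq : ∀ X, J (J X) = -X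
  J_compat : ∀ X Y, g (J X) (J Y) = g X Y

namespace AlmostHermitianStatManifold

variable {F V : Type*} [CommRing F] [Algebra ℝ F]
  [AddCommGroup V] [Module F V] [Module ℝ V] [IsScalarTower ℝ F V]

/-- The difference tensor `K_X Y = ∇_X Y - ∇⁰_X Y`. -/
def K (M : AlmostHermitianStatManifold F V) (X Y : V) : V := M.conn X Y - M.conn0 X Y

/-- The fundamental 2-form `Ω(X,Y) = g(JX, Y)`. -/
def Omega (M : AlmostHermitianStatManifold F V) (X Y : V) : F := M.g (M.J X) Y

/-- The covariant derivative `(D_X Ω)(Y,Z) = X Ω(Y,Z) - Ω(D_X Y, Z) - Ω(Y, D_X Z)`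
of the fundamental 2-form with respect to an affine connection `Dc`. -/
def covOmega (M : AlmostHermitianStatManifold F V) (Dc : V → V → V) (X Y Z : V) : F :=
  M.D X (M.Omega Y Z) - M.Omega (Dc X Y) Z - M.Omega Y (Dc X Z)

/-- The exterior derivative of the fundamental 2-form `Ω`, with the convention
`3 dΩ(X,Y,Z) = X Ω(Y,Z) + Y Ω(Z,X) + Z Ω(X,Y) - Ω([X,Y],Z) - Ω([Y,Z],X) - Ω([Z,X],Y)`. -/
noncomputable def dOmega (M : AlmostHermitianStatManifold F V) (X Y Z : V) : F :=
  (3⁻¹ : ℝ) • (M.D X (M.Omega Y Z) + M.D Y (M.Omega Z X) + M.D Z (M.Omega X Y)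
    - M.Omega (M.bracket X Y) Z - M.Omega (M.bracket Y Z) X - M.Omega (M.bracket Z X) Y)

/-- The Nijenhuis torsion `N_J(X,Y) = [X,Y] - [JX,JY] + J[X,JY] + J[JX,Y]` of `J`. -/
def nijenhuis (M : AlmostHermitianStatManifold F V) (X Y : V) : V :=
  M.bracket X Y - M.bracket (M.J X) (M.J Y)
    + M.J (M.bracket X (M.J Y)) + M.J (M.bracket (M.J X) Y)

end AlmostHermitianStatManifold

/-- A Kaehler statistical manifold: an almost Hermitian statistical manifold whose
underlying almost Hermitian manifold is Kaehler, i.e. `∇⁰ J = 0` for the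
Levi-Civita connection `∇⁰`. -/
structure KaehlerStatManifold (F V : Type*) [CommRing F] [Algebra ℝ F]
    [AddCommGroup V] [Module F V] [Module ℝ V] [IsScalarTower ℝ F V]
    extends AlmostHermitianStatManifold F V where
  /-- `∇⁰ J = 0` -/
  J_parallel : ∀ X Y, conn0 X (J Y) = J (conn0 X Y)

variable {F V : Type*} [CommRing F] [Algebra ℝ F]
  [AddCommGroup V] [Module F V] [Module ℝ V] [IsScalarTower ℝ F V]

namespace KaehlerAux

open AlmostHermitianStatManifold

variable (M : KaehlerStatManifold F V)

/-- The dual difference tensor `K*_X Y = ∇*_X Y - ∇⁰_X Y`. -/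
def Kd (X Y : V) : V := M.connD X Y - M.conn0 X Y

lemma g_smul_right (a : F) (X Y : V) : M.g X (a • Y) = a * M.g X Y := by
  rw [M.g_symm, M.g_smul_left, M.g_symm]

lemma g_sub_left (X Y Z : V) : M.g (X - Y) Z = M.g X Z - M.g Y Z := by
  rw [sub_eq_add_neg, ← neg_one_smul F Y, M.g_add_left, M.g_smul_left]; ring

lemma g_sub_right (X Y Z : V) : M.g X (Y - Z) = M.g X Y - M.g X Z := by
  rw [M.g_symm, g_sub_left, M.g_symm Y, M.g_symm Z]

lemma g_add_right (X Y Z : V) : M.g X (Y + Z) = M.g X Y + M.g X Z := by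
  rw [M.g_symm, M.g_add_left, M.g_symm Y, M.g_symm Z]

lemma g_zero_left (Z : V) : M.g 0 Z = 0 := by
  have := M.g_smul_left 0 0 Z
  simpa using this

lemma J_sub (X Y : V) : M.J (X - Y) = M.J X - M.J Y := by
  have : M.J (X + (-1 : F) • Y) = M.J X + (-1 : F) • M.J Y := by
    rw [M.J_add, M.J_smul]
  simpa [neg_one_smul, sub_eq_add_neg] using this

lemma J_neg (X : V) : M.J (-X) = - M.J X := by
  have := J_sub M 0 X
  have h0 : M.J (0 : V) = 0 := by
    have := M.J_smul 0 0
    simpa using this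
  simpa [h0] using this

lemma K_eq (X Y : V) : M.K X Y = M.conn X Y - M.conn0 X Y := rfl

lemma K_symm (X Y : V) : M.K X Y = M.K Y X := by
  have h1 : M.conn X Y = M.bracket X Y + M.conn Y X := by
    rw [← M.conn_torsion_free X Y]; abel
  have h0 : M.conn0 X Y = M.bracket X Y + M.conn0 Y X := by
    rw [← M.conn0_torsion_free X Y]; abel
  rw [K_eq, K_eq, h1, h0]; abel

lemma Kd_symm (X Y : V) : Kd M X Y = Kd M Y X := by
  have h1 : M.connD X Y = M.bracket X Y + M.connD Y X := by
    rw [← M.connD_torsion_free X Y]; abel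
  have h0 : M.conn0 X Y = M.bracket X Y + M.conn0 Y X := by
    rw [← M.conn0_torsion_free X Y]; abel
  rw [Kd, Kd, h1, h0]; abel

/-- The fundamental relation `g(K_X Y, Z) + g(Y, K*_X Z) = 0`. -/
lemma grel (X Y Z : V) : M.g (M.K X Y) Z + M.g Y (Kd M X Z) = 0 := by
  have hd := M.duality Y Z X
  have hm := M.conn0_metric Y Z X
  rw [K_eq, Kd, g_sub_left, g_sub_right]
  rw [hd] at hm
  linear_combination hm

lemma A_cyc (X Y Z : V) : M.g (M.K X Y) Z = M.g (M.K Z Y) X := by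
  have h1 := grel M X Y Z
  have h2 := grel M Z Y X
  have h3 : M.g Y (Kd M X Z) = M.g Y (Kd M Z X) := by rw [Kd_symm]
  linear_combination h1 - h2 - h3

lemma A_symm23 (X Y Z : V) : M.g (M.K X Y) Z = M.g (M.K X Z) Y := by
  calc M.g (M.K X Y) Z = M.g (M.K Y X) Z := by rw [K_symm]
    _ = M.g (M.K Z X) Y := A_cyc M Y X Z
    _ = M.g (M.K X Z) Y := by rw [K_symm]

lemma Kd_eq_neg_K (X Y : V) : Kd M X Y = -(M.K X Y) := by
  have h : ∀ Z : V, M.g (Kd M X Y + M.K X Y) Z = 0 := by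
    intro Z
    have h1 := grel M X Z Y
    have h2 := A_symm23 M X Z Y
    have h3 : M.g (Kd M X Y) Z = M.g Z (Kd M X Y) := M.g_symm _ _
    have h4 : M.g (M.K X Y) Z = M.g (M.K X Z) Y := A_symm23 M X Y Z
    rw [M.g_add_left]
    linear_combination h1 + h3 + h4
  exact eq_neg_of_add_eq_zero_left (M.g_nondeg _ h)

lemma covOmega_conn (X Y Z : V) :
    M.covOmega M.conn X Y Z = -(M.g (M.K X (M.J Y) + M.J (M.K X Y)) Z) := by
  have hD : M.D X (M.g (M.J Y) Z)
      = M.g (M.J (M.conn0 X Y)) Z + M.g (M.J Y) (M.conn0 X Z) := by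
    rw [M.conn0_metric (M.J Y) Z X, M.J_parallel]
  have key : M.g (M.J Y) (M.K X Z) = M.g (M.K X (M.J Y)) Z := by
    rw [M.g_symm]; exact A_symm23 M X Z (M.J Y)
  show M.D X (M.g (M.J Y) Z) - M.g (M.J (M.conn X Y)) Z - M.g (M.J Y) (M.conn X Z)
      = -(M.g (M.K X (M.J Y) + M.J (M.K X Y)) Z)
  rw [hD, M.g_add_left]
  have hJ : M.g (M.J (M.conn X Y)) Z
      = M.g (M.J (M.conn0 X Y)) Z + M.g (M.J (M.K X Y)) Z := by
    rw [← M.g_add_left, ← M.J_add, K_eq]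
    congr 2
    abel
  have hK : M.g (M.J Y) (M.conn X Z)
      = M.g (M.J Y) (M.conn0 X Z) + M.g (M.J Y) (M.K X Z) := by
    rw [← g_add_right, K_eq]
    congr 1
    abel
  rw [hJ, hK, key]
  ring

lemma covOmega_connD (X Y Z : V) :
    M.covOmega M.connD X Y Z = M.g (M.K X (M.J Y) + M.J (M.K X Y)) Z := by
  have hD : M.D X (M.g (M.J Y) Z)
      = M.g (M.J (M.conn0 X Y)) Z + M.g (M.J Y) (M.conn0 X Z) := by
    rw [M.conn0_metric (M.J Y) Z X, M.J_parallel]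
  have key : M.g (M.J Y) (M.K X Z) = M.g (M.K X (M.J Y)) Z := by
    rw [M.g_symm]; exact A_symm23 M X Z (M.J Y)
  show M.D X (M.g (M.J Y) Z) - M.g (M.J (M.connD X Y)) Z - M.g (M.J Y) (M.connD X Z)
      = M.g (M.K X (M.J Y) + M.J (M.K X Y)) Z
  rw [hD, M.g_add_left]
  have hJ : M.g (M.J (M.connD X Y)) Z
      = M.g (M.J (M.conn0 X Y)) Z - M.g (M.J (M.K X Y)) Z := by
    rw [← g_sub_left, ← J_sub]
    congr 2
    have : M.connD X Y = M.conn0 X Y + Kd M X Y := by rw [Kd]; abel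
    rw [this, Kd_eq_neg_K]
    abel
  have hK : M.g (M.J Y) (M.connD X Z)
      = M.g (M.J Y) (M.conn0 X Z) - M.g (M.J Y) (M.K X Z) := by
    rw [← g_sub_right]
    congr 1
    have : M.connD X Z = M.conn0 X Z + Kd M X Z := by rw [Kd]; abel
    rw [this, Kd_eq_neg_K]
    abel
  rw [hJ, hK, key]
  ring

end KaehlerAux

open AlmostHermitianStatManifold in
/-- For a Kaehler statistical manifold, the following are equivalent:
(1) `∇Ω = 0`;
(2) `K_X(JY) + J(K_X Y) = 0` for all `X, Y` (`N` is a holomorphic statistical manifold);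
(3) `∇*Ω = 0`. -/
theorem kaehler_holomorphic_tfae (M : KaehlerStatManifold F V) :
    ((∀ X Y Z : V, M.covOmega M.conn X Y Z = 0)
        ↔ (∀ X Y : V, M.K X (M.J Y) + M.J (M.K X Y) = 0))
    ∧ ((∀ X Y : V, M.K X (M.J Y) + M.J (M.K X Y) = 0)
        ↔ (∀ X Y Z : V, M.covOmega M.connD X Y Z = 0)) := by
  constructor
  · constructor
    · intro h X Y
      apply M.g_nondeg
      intro Z
      have := h X Y Z
      rw [KaehlerAux.covOmega_conn] at this
      exact neg_eq_zero.mp this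
    · intro h X Y Z
      rw [KaehlerAux.covOmega_conn, h, KaehlerAux.g_zero_left]
      ring
  · constructor
    · intro h X Y Z
      rw [KaehlerAux.covOmega_connD, h, KaehlerAux.g_zero_left]
    · intro h X Y
      apply M.g_nondeg
      intro Z
      have := h X Y Z
      rw [KaehlerAux.covOmega_connD] at this
      exact this
end

section
/- Let (M, g, φ, ξ, η, ∇, ∇*) be an almost cosymplectic statistical manifold with fundamental 2-form Φ(X,Y) = g(φX, Y), and set AX = -∇_X ξ, A*X = -∇*_X ξ. Then for all vector fields X, Y, Z: (∇_X Φ)(Y, φZ) + (∇*_X Φ)(Z, φY) = η(Y) g(AX, Z) + η(Z) g(A*X, Y), and (∇*_X Φ)(φZ, φY) - (∇_X Φ)(Y, Z) = η(Y) g(AX, φZ) - η(Z) g(AX, φY). -/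
/-- An almost contact metric statistical manifold `(M, g, φ, ξ, η, ∇, ∇*)`:
a statistical manifold endowed with an almost contact metric structure
`φ² = -Id + η ⊗ ξ`, `η(ξ) = 1`, `g(φX, φY) = g(X,Y) - η(X)η(Y)`
(together with the standard identities `η(X) = g(X, ξ)` and `φξ = 0`). -/
structure AlmostContactMetricStatManifold (F V : Type*) [CommRing F] [Algebra ℝ F]
    [AddCommGroup V] [Module F V] [Module ℝ V] [IsScalarTower ℝ F V]
    extends StatisticalManifold F V where
  /-- the structure `(1,1)`-tensor field `φ` -/
  phi : V → V
  /-- the characteristic (Reeb) vector field `ξ` -/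
  xi : V
  /-- the structure 1-form `η` -/
  eta : V → F
  phi_add : ∀ X Y, phi (X + Y) = phi X + phi Y
  phi_smul : ∀ (a : F) (X : V), phi (a • X) = a • phi X
  eta_add : ∀ X Y, eta (X + Y) = eta X + eta Y
  eta_smul : ∀ (a : F) (X : V), eta (a • X) = a * eta X
  phi_sq : ∀ X, phi (phi X) = -X + eta X • xi
  eta_xi : eta xi = 1
  phi_compat : ∀ X Y, g (phi X) (phi Y) = g X Y - eta X * eta Y
  eta_eq : ∀ X, eta X = g X xi
  phi_xi : phi xi = 0

namespace AlmostContactMetricStatManifold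

variable {F V : Type*} [CommRing F] [Algebra ℝ F]
  [AddCommGroup V] [Module F V] [Module ℝ V] [IsScalarTower ℝ F V]

/-- The difference tensor `K_X Y = ∇_X Y - ∇⁰_X Y`. -/
def K (M : AlmostContactMetricStatManifold F V) (X Y : V) : V := M.conn X Y - M.conn0 X Y

/-- The fundamental 2-form `Φ(X,Y) = g(φX, Y)`. -/
def Phi (M : AlmostContactMetricStatManifold F V) (X Y : V) : F := M.g (M.phi X) Y

/-- The covariant derivative `(D_X Φ)(Y,Z) = X Φ(Y,Z) - Φ(D_X Y, Z) - Φ(Y, D_X Z)`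
of the fundamental 2-form with respect to an affine connection `Dc`. -/
def covPhi (M : AlmostContactMetricStatManifold F V) (Dc : V → V → V) (X Y Z : V) : F :=
  M.D X (M.Phi Y Z) - M.Phi (Dc X Y) Z - M.Phi Y (Dc X Z)

/-- The tensor field `A X = -∇_X ξ`. -/
def A (M : AlmostContactMetricStatManifold F V) (X : V) : V := -(M.conn X M.xi)

/-- The tensor field `A* X = -∇*_X ξ`. -/
def AStar (M : AlmostContactMetricStatManifold F V) (X : V) : V := -(M.connD X M.xi)

/-- The tensor field `A⁰ X = -∇⁰_X ξ`. -/
def A0 (M : AlmostContactMetricStatManifold F V) (X : V) : V := -(M.conn0 X M.xi)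

/-- The curvature tensor `R(X,Y)Z = D_X D_Y Z - D_Y D_X Z - D_{[X,Y]} Z` of an
affine connection `Dc`. -/
def curv (M : AlmostContactMetricStatManifold F V) (Dc : V → V → V) (X Y Z : V) : V :=
  Dc X (Dc Y Z) - Dc Y (Dc X Z) - Dc (M.bracket X Y) Z

end AlmostContactMetricStatManifold

/-- An almost cosymplectic statistical manifold: an almost contact metric
statistical manifold with `dη = 0` and `dΦ = 0` (closedness expressed through the
usual formulas for the exterior derivative, up to the irrelevant constant factors). -/
structure AlmostCosymplecticStatManifold (F V : Type*) [CommRing F] [Algebra ℝ F]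
    [AddCommGroup V] [Module F V] [Module ℝ V] [IsScalarTower ℝ F V]
    extends AlmostContactMetricStatManifold F V where
  /-- `dη = 0` -/
  eta_closed : ∀ X Y, D X (eta Y) - D Y (eta X) - eta (bracket X Y) = 0
  /-- `dΦ = 0` -/
  phi_form_closed : ∀ X Y Z,
    D X (g (phi Y) Z) + D Y (g (phi Z) X) + D Z (g (phi X) Y)
      - g (phi (bracket X Y)) Z - g (phi (bracket Y Z)) X - g (phi (bracket Z X)) Y = 0

variable {F V : Type*} [CommRing F] [Algebra ℝ F]
  [AddCommGroup V] [Module F V] [Module ℝ V] [IsScalarTower ℝ F V]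

namespace AlmostContactMetricStatManifold

variable (M : AlmostContactMetricStatManifold F V)

lemma g_zero_left' (Y : V) : M.g 0 Y = 0 := by
  have h := M.g_add_left 0 0 Y
  rw [add_zero] at h
  linear_combination -h

lemma g_neg_left' (X Y : V) : M.g (-X) Y = -(M.g X Y) := by
  have h := M.g_add_left X (-X) Y
  rw [add_neg_cancel] at h
  linear_combination M.g_zero_left' Y - h

lemma g_add_right' (X Y Z : V) : M.g X (Y + Z) = M.g X Y + M.g X Z := by
  rw [M.g_symm X (Y + Z), M.g_add_left, M.g_symm Y X, M.g_symm Z X]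

lemma g_smul_right' (a : F) (X Y : V) : M.g X (a • Y) = a * M.g X Y := by
  rw [M.g_symm X (a • Y), M.g_smul_left, M.g_symm Y X]

lemma g_neg_right' (X Y : V) : M.g X (-Y) = -(M.g X Y) := by
  rw [M.g_symm X (-Y), M.g_neg_left', M.g_symm Y X]

lemma D_zero' (X : V) : M.D X 0 = 0 := by
  have h := M.D_add_right X 0 0
  rw [add_zero] at h
  linear_combination -h

lemma D_neg' (X : V) (a : F) : M.D X (-a) = -(M.D X a) := by
  have h := M.D_add_right X a (-a)
  rw [add_neg_cancel, M.D_zero'] at h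
  linear_combination -h

lemma D_sub' (X : V) (a b : F) : M.D X (a - b) = M.D X a - M.D X b := by
  rw [sub_eq_add_neg, M.D_add_right, M.D_neg', sub_eq_add_neg]

lemma eta_zero' : M.eta 0 = 0 := by
  have h := M.eta_add 0 0
  rw [add_zero] at h
  linear_combination -h

lemma phi_zero' : M.phi 0 = 0 := by
  have h := M.phi_add 0 0
  rw [add_zero] at h
  exact left_eq_add.mp h

lemma phi_neg' (X : V) : M.phi (-X) = -(M.phi X) := by
  have h := M.phi_add X (-X)
  rw [add_neg_cancel, M.phi_zero'] at h
  exact eq_neg_of_add_eq_zero_right h.symm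

lemma eta_phi' (X : V) : M.eta (M.phi X) = 0 := by
  have h1 := M.phi_sq (M.phi X)
  have h2 : M.phi (M.phi (M.phi X)) = -(M.phi X) := by
    rw [M.phi_sq X, M.phi_add, M.phi_neg', M.phi_smul, M.phi_xi, smul_zero, add_zero]
  rw [h2] at h1
  have h3 : M.eta (M.phi X) • M.xi = 0 := (left_eq_add.mp h1)
  calc M.eta (M.phi X) = M.eta (M.phi X) * M.eta M.xi := by rw [M.eta_xi, mul_one]
    _ = M.eta (M.eta (M.phi X) • M.xi) := (M.eta_smul _ _).symm
    _ = 0 := by rw [h3, M.eta_zero']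

lemma g_xi_phi' (X : V) : M.g M.xi (M.phi X) = 0 := by
  rw [M.g_symm, ← M.eta_eq, M.eta_phi']

lemma phi_skew' (X Y : V) : M.g (M.phi X) Y = -(M.g X (M.phi Y)) := by
  have h := M.phi_compat X (M.phi Y)
  rw [M.eta_phi', mul_zero, sub_zero, M.phi_sq Y, M.g_add_right', M.g_neg_right',
    M.g_smul_right', ← M.eta_eq, M.eta_phi', mul_zero, add_zero] at h
  linear_combination -h

end AlmostContactMetricStatManifold

open AlmostContactMetricStatManifold in
/-- For an almost cosymplectic statistical manifold:
`(∇_X Φ)(Y, φZ) + (∇*_X Φ)(Z, φY) = η(Y) g(AX, Z) + η(Z) g(A*X, Y)` and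
`(∇*_X Φ)(φZ, φY) - (∇_X Φ)(Y, Z) = η(Y) g(AX, φZ) - η(Z) g(AX, φY)`. -/
theorem almostCosymplectic_covPhi_identities (M : AlmostCosymplecticStatManifold F V)
    (X Y Z : V) :
    (M.covPhi M.conn X Y (M.phi Z) + M.covPhi M.connD X Z (M.phi Y)
        = M.eta Y * M.g (M.A X) Z + M.eta Z * M.g (M.AStar X) Y)
    ∧ (M.covPhi M.connD X (M.phi Z) (M.phi Y) - M.covPhi M.conn X Y Z
        = M.eta Y * M.g (M.A X) (M.phi Z) - M.eta Z * M.g (M.A X) (M.phi Y)) := by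
  constructor
  · simp only [covPhi, Phi, A, AStar]
    have h1 := M.duality (M.phi Z) (M.phi Y) X
    have hsym1 := M.g_symm (M.phi Y) (M.conn X (M.phi Z))
    have hd1 : M.D X (M.g (M.phi Y) (M.phi Z))
        = M.D X (M.g Y Z) - M.D X (M.eta Y * M.eta Z) := by
      rw [M.phi_compat Y Z, M.D_sub']
    have hm := M.D_mul_right X (M.eta Y) (M.eta Z)
    have hdy := M.duality Y Z X
    have hc2 := M.phi_compat (M.conn X Y) Z
    have hc3 := M.phi_compat (M.connD X Z) Y
    have hsym2 := M.g_symm Y (M.connD X Z)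
    have hdez : M.D X (M.eta Z)
        = M.g (M.conn X M.xi) Z + M.g M.xi (M.connD X Z) := by
      rw [M.eta_eq, M.g_symm Z M.xi]; exact M.duality M.xi Z X
    have hdey : M.D X (M.eta Y)
        = M.g (M.conn X Y) M.xi + M.g Y (M.connD X M.xi) := by
      rw [M.eta_eq]; exact M.duality Y M.xi X
    have heta1 : M.eta (M.conn X Y) = M.g (M.conn X Y) M.xi := M.eta_eq _
    have heta2 : M.eta (M.connD X Z) = M.g M.xi (M.connD X Z) := by
      rw [M.eta_eq]; exact M.g_symm _ _
    have hneg1 := M.g_neg_left' (M.conn X M.xi) Z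
    have hneg2 := M.g_neg_left' (M.connD X M.xi) Y
    have hsym3 := M.g_symm Y (M.connD X M.xi)
    linear_combination h1 - hsym1 + hd1 - hm + hdy - hc2 - hc3 + hsym2
      - M.eta Y * hdez - M.eta Z * hdey + M.eta Z * heta1 + M.eta Y * heta2
      - M.eta Y * hneg1 - M.eta Z * hneg2 - M.eta Z * hsym3
  · simp only [covPhi, Phi, A]
    have hq : M.g (M.phi (M.phi Z)) (M.phi Y) = M.g Y (M.phi Z) := by
      rw [M.phi_sq Z, M.g_add_left, M.g_neg_left', M.g_smul_left, M.g_xi_phi',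
        mul_zero, add_zero]
      linear_combination -(M.phi_skew' Z Y) - M.g_symm Y (M.phi Z)
    have hdq := congrArg (M.D X) hq
    have d1 := M.duality Y (M.phi Z) X
    have hc := M.phi_compat (M.connD X (M.phi Z)) Y
    have hp2 : M.g (M.phi (M.phi Z)) (M.connD X (M.phi Y))
        = -(M.g Z (M.connD X (M.phi Y)))
          + M.eta Z * M.g M.xi (M.connD X (M.phi Y)) := by
      rw [M.phi_sq Z, M.g_add_left, M.g_neg_left', M.g_smul_left]
    have hdq2 := congrArg (M.D X) (M.g_symm (M.phi Y) Z)
    have d2 := M.duality Z (M.phi Y) X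
    have skew1 := M.phi_skew' (M.conn X Y) Z
    have hsyma := M.g_symm (M.phi Y) (M.conn X Z)
    have hz1 : M.D X (M.g M.xi (M.phi Z)) = 0 := by
      rw [M.g_xi_phi']; exact M.D_zero' X
    have d3 := M.duality M.xi (M.phi Z) X
    have he3 : M.eta (M.connD X (M.phi Z)) = M.g M.xi (M.connD X (M.phi Z)) := by
      rw [M.eta_eq]; exact M.g_symm _ _
    have hz2 : M.D X (M.g M.xi (M.phi Y)) = 0 := by
      rw [M.g_xi_phi']; exact M.D_zero' X
    have d4 := M.duality M.xi (M.phi Y) X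
    have hnegA := M.g_neg_left' (M.conn X M.xi) (M.phi Z)
    have hnegB := M.g_neg_left' (M.conn X M.xi) (M.phi Y)
    have hsymC := M.g_symm Y (M.connD X (M.phi Z))
    linear_combination hdq + d1 - hc - hp2 - hdq2 - d2 + skew1 + hsyma + hsymC
      + M.eta Y * he3 - M.eta Y * d3 + M.eta Y * hz1 - M.eta Y * hnegA
      + M.eta Z * d4 - M.eta Z * hz2 + M.eta Z * hnegB
end

section
/- An almost cosymplectic statistical manifold (M, g, φ, ξ, η, ∇, ∇*) has Kaehler statistical leaves (i.e. each leaf of the integrable distribution η = 0, with the induced structure J = φ|leaf and induced metric, is a Kaehler statistical manifold) if and only if for all vector fields X, Y: (∇_X φ)Y = (K_X φ)Y + g(A⁰X, φY) ξ + η(Y) φ(A⁰X) and (∇*_X φ)Y = -(K_X φ)Y + g(A⁰X, φY) ξ + η(Y) φ(A⁰X), where A⁰ = -∇⁰ξ and K is the difference tensor. -/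
variable {F V : Type*} [CommRing F] [Algebra ℝ F]
  [AddCommGroup V] [Module F V] [Module ℝ V] [IsScalarTower ℝ F V]


namespace AlmostCosymplecticStatManifold

variable {F V : Type*} [CommRing F] [Algebra ℝ F]
  [AddCommGroup V] [Module F V] [Module ℝ V] [IsScalarTower ℝ F V]
  (M : AlmostCosymplecticStatManifold F V)

open AlmostContactMetricStatManifold

lemma phi_sub (X Y : V) : M.phi (X - Y) = M.phi X - M.phi Y := by
  have h := M.phi_add (X - Y) Y
  rw [sub_add_cancel] at h
  linear_combination (norm := abel) -h

lemma g_sub_left (X Y Z : V) : M.g (X - Y) Z = M.g X Z - M.g Y Z := by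
  have h := M.g_add_left (X - Y) Y Z
  rw [sub_add_cancel] at h
  linear_combination -h

lemma g_sub_right (X Y Z : V) : M.g X (Y - Z) = M.g X Y - M.g X Z := by
  rw [M.g_symm, M.g_sub_left, M.g_symm Y X, M.g_symm Z X]

/-- the difference tensor is symmetric -/
lemma K_symm (X Y : V) : M.K X Y = M.K Y X := by
  have h1 := M.conn_torsion_free X Y
  have h2 := M.conn0_torsion_free X Y
  unfold AlmostContactMetricStatManifold.K
  have : M.conn X Y - M.conn Y X = M.conn0 X Y - M.conn0 Y X := h1.trans h2.symm
  abel_nf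
  abel_nf at this
  linear_combination (norm := abel) this

/-- the cubic form identity coming from duality and metricity of `∇⁰` -/
lemma K_dual (Z X Y : V) :
    M.g (M.K Z X) Y = M.g X (M.conn0 Z Y - M.connD Z Y) := by
  have h1 := M.duality X Y Z
  have h2 := M.conn0_metric X Y Z
  unfold AlmostContactMetricStatManifold.K
  rw [M.g_sub_left, M.g_sub_right]
  linear_combination h2 - h1

/-- total symmetry of the cubic form `g(K_X Y, Z)` -/
lemma K_cubic_symm (X Y Z : V) : M.g (M.K X Y) Z = M.g (M.K X Z) Y := by
  -- L X Y := conn0 X Y - connD X Y is symmetric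
  have hL : ∀ U W : V, M.conn0 U W - M.connD U W = M.conn0 W U - M.connD W U := by
    intro U W
    have h1 := M.conn0_torsion_free U W
    have h2 := M.connD_torsion_free U W
    have : M.conn0 U W - M.conn0 W U = M.connD U W - M.connD W U := h1.trans h2.symm
    linear_combination (norm := abel) this
  -- cyclic identity : g (K a b) c = g (K b c) a
  have hcyc : ∀ a b c : V, M.g (M.K a b) c = M.g (M.K b c) a := by
    intro a b c
    calc M.g (M.K a b) c = M.g b (M.conn0 a c - M.connD a c) := M.K_dual a b c
      _ = M.g b (M.conn0 c a - M.connD c a) := by rw [hL]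
      _ = M.g (M.K c b) a := (M.K_dual c b a).symm
      _ = M.g (M.K b c) a := by rw [M.K_symm]
  calc M.g (M.K X Y) Z = M.g (M.K Y Z) X := hcyc X Y Z
    _ = M.g (M.K Z X) Y := hcyc Y Z X
    _ = M.g (M.K X Z) Y := by rw [M.K_symm]

/-- the dual connection is `∇⁰ - K` -/
lemma connD_eq (X Y : V) : M.connD X Y = M.conn0 X Y - M.K X Y := by
  have key : ∀ Z : V, M.g (M.connD X Y - (M.conn0 X Y - M.K X Y)) Z = 0 := by
    intro Z
    have h := M.K_dual X Z Y
    rw [M.g_sub_right] at h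
    have h2 : M.g (M.K X Z) Y = M.g (M.K X Y) Z := M.K_cubic_symm X Z Y
    rw [M.g_sub_left, M.g_sub_left]
    rw [M.g_symm (M.connD X Y) Z, M.g_symm (M.conn0 X Y) Z]
    linear_combination h - h2
  have := M.g_nondeg _ key
  linear_combination (norm := abel) this

/-- `∇ = ∇⁰ + K` by definition -/
lemma conn_eq (X Y : V) : M.conn X Y = M.conn0 X Y + M.K X Y := by
  unfold AlmostContactMetricStatManifold.K
  abel

end AlmostCosymplecticStatManifold

open AlmostContactMetricStatManifold in
/-- An almost cosymplectic (statistical) manifold has Kaehler (statistical) leaves: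
since `η` is closed, the distribution `η = 0` is completely integrable and each leaf
carries an induced almost Kaehler (statistical) structure; by the result of Dacko and
Olszak, the leaves are Kaehler if and only if
`(∇⁰_X φ)Y = g(A⁰X, φY) ξ + η(Y) φ(A⁰X)` with `A⁰ = -∇⁰ξ`,
which we take as the definition. -/
def AlmostCosymplecticStatManifold.HasKaehlerStatisticalLeaves
    (M : AlmostCosymplecticStatManifold F V) : Prop :=
  ∀ X Y : V, M.conn0 X (M.phi Y) - M.phi (M.conn0 X Y)
    = M.g (M.A0 X) (M.phi Y) • M.xi + M.eta Y • M.phi (M.A0 X)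

open AlmostContactMetricStatManifold in
/-- An almost cosymplectic statistical manifold has Kaehler
statistical leaves if and only if
`(∇_X φ)Y = (K_X φ)Y + g(A⁰X, φY) ξ + η(Y) φ(A⁰X)` and
`(∇*_X φ)Y = -(K_X φ)Y + g(A⁰X, φY) ξ + η(Y) φ(A⁰X)` for all `X, Y`. -/
theorem almostCosymplectic_kaehler_leaves_iff (M : AlmostCosymplecticStatManifold F V) :
    M.HasKaehlerStatisticalLeaves
      ↔ ((∀ X Y : V, M.conn X (M.phi Y) - M.phi (M.conn X Y)
            = (M.K X (M.phi Y) - M.phi (M.K X Y))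
              + M.g (M.A0 X) (M.phi Y) • M.xi + M.eta Y • M.phi (M.A0 X))
        ∧ (∀ X Y : V, M.connD X (M.phi Y) - M.phi (M.connD X Y)
            = -(M.K X (M.phi Y) - M.phi (M.K X Y))
              + M.g (M.A0 X) (M.phi Y) • M.xi + M.eta Y • M.phi (M.A0 X))) := by
  constructor
  · intro h
    constructor
    · intro X Y
      have h0 := h X Y
      rw [M.conn_eq X (M.phi Y), M.conn_eq X Y, M.phi_add]
      linear_combination (norm := abel) h0
    · intro X Y
      have h0 := h X Y
      rw [M.connD_eq X (M.phi Y), M.connD_eq X Y, M.phi_sub]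
      linear_combination (norm := abel) h0
  · intro ⟨h1, _⟩ X Y
    have h0 := h1 X Y
    rw [M.conn_eq X (M.phi Y), M.conn_eq X Y, M.phi_add] at h0
    linear_combination (norm := abel) h0
end

section
/- Let (M, g, φ, ξ, η, ∇, ∇*) be an almost cosymplectic statistical manifold and define h⁰ = (1/2) L_ξ φ, h = (1/2)(Aφ - φA), h* = (1/2)(A*φ - φA*), where AX = -∇_X ξ and A*X = -∇*_X ξ. Then for all vector fields X, Y: g(hX, Y) = g(X, hY), g(h*X, Y) = g(X, h*Y), h⁰X = hX + (1/2)(K_ξ φ)X, and h⁰X = h*X - (1/2)(K_ξ φ)X, where K is the difference tensor and (K_ξ φ)X = K_ξ(φX) - φ(K_ξ X). -/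
variable {F V : Type*} [CommRing F] [Algebra ℝ F]
  [AddCommGroup V] [Module F V] [Module ℝ V] [IsScalarTower ℝ F V]

namespace AlmostCosymplecticStatManifold

variable (M : AlmostCosymplecticStatManifold F V)

open AlmostContactMetricStatManifold

/-- `h⁰ = (1/2) L_ξ φ`, where `(L_ξ φ)X = [ξ, φX] - φ[ξ, X]`. -/
noncomputable def h0 (X : V) : V :=
  ((2 : ℝ)⁻¹) • (M.bracket M.xi (M.phi X) - M.phi (M.bracket M.xi X))

/-- `h = (1/2)(Aφ - φA)`. -/
noncomputable def h (X : V) : V :=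
  ((2 : ℝ)⁻¹) • (M.A (M.phi X) - M.phi (M.A X))

/-- `h* = (1/2)(A*φ - φA*)`. -/
noncomputable def hStar (X : V) : V :=
  ((2 : ℝ)⁻¹) • (M.AStar (M.phi X) - M.phi (M.AStar X))

end AlmostCosymplecticStatManifold

section Aux

open AlmostContactMetricStatManifold

variable (M : AlmostCosymplecticStatManifold F V)

/-- `K*_X Y = ∇*_X Y - ∇⁰_X Y`, the dual difference tensor. -/
def KS (M : AlmostCosymplecticStatManifold F V) (X Y : V) : V :=
  M.connD X Y - M.conn0 X Y

lemma aux_D_zero (X : V) : M.D X 0 = 0 := by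
  have h := M.D_add_right X 0 0
  rw [add_zero] at h
  exact left_eq_add.mp h

lemma aux_D_one (X : V) : M.D X 1 = 0 := by
  have h := M.D_mul_right X 1 1
  simp only [one_mul, mul_one] at h
  exact left_eq_add.mp h

lemma aux_g_add_right (X Y Z : V) : M.g X (Y + Z) = M.g X Y + M.g X Z := by
  rw [M.g_symm, M.g_add_left, M.g_symm Y, M.g_symm Z]

lemma aux_g_smul_right (a : F) (X Y : V) : M.g X (a • Y) = a * M.g X Y := by
  rw [M.g_symm, M.g_smul_left, M.g_symm]

lemma aux_g_zero_left (Y : V) : M.g 0 Y = 0 := by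
  have h := M.g_smul_left 0 0 Y
  rw [zero_smul, zero_mul] at h
  exact h

lemma aux_g_zero_right (X : V) : M.g X 0 = 0 := by
  rw [M.g_symm]; exact aux_g_zero_left M X

lemma aux_g_neg_left (X Y : V) : M.g (-X) Y = -(M.g X Y) := by
  have h := M.g_smul_left (-1) X Y
  rw [neg_one_smul, neg_one_mul] at h
  exact h

lemma aux_g_neg_right (X Y : V) : M.g X (-Y) = -(M.g X Y) := by
  rw [M.g_symm, aux_g_neg_left, M.g_symm]

lemma aux_g_sub_left (X Y Z : V) : M.g (X - Y) Z = M.g X Z - M.g Y Z := by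
  rw [sub_eq_add_neg, M.g_add_left, aux_g_neg_left, sub_eq_add_neg]

lemma aux_g_sub_right (X Y Z : V) : M.g X (Y - Z) = M.g X Y - M.g X Z := by
  rw [M.g_symm, aux_g_sub_left, M.g_symm Y, M.g_symm Z]

lemma aux_g_rsmul_left (r : ℝ) (X Y : V) : M.g (r • X) Y = r • M.g X Y := by
  rw [← algebraMap_smul F r X, M.g_smul_left, ← Algebra.smul_def]

lemma aux_g_rsmul_right (r : ℝ) (X Y : V) : M.g X (r • Y) = r • M.g X Y := by
  rw [M.g_symm, aux_g_rsmul_left, M.g_symm]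

lemma aux_phi_zero : M.phi 0 = 0 := by
  have h := M.phi_smul 0 0
  rw [zero_smul, zero_smul] at h
  exact h

lemma aux_phi_neg (X : V) : M.phi (-X) = -(M.phi X) := by
  have h := M.phi_smul (-1) X
  rw [neg_one_smul, neg_one_smul] at h
  exact h

lemma aux_phi_sub (X Y : V) : M.phi (X - Y) = M.phi X - M.phi Y := by
  rw [sub_eq_add_neg, M.phi_add, aux_phi_neg, sub_eq_add_neg]

lemma aux_eta_zero : M.eta 0 = 0 := by
  have h := M.eta_smul 0 0
  rw [zero_smul, zero_mul] at h
  exact h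

lemma aux_eta_phi (X : V) : M.eta (M.phi X) = 0 := by
  have h1 := M.phi_sq (M.phi X)
  rw [M.phi_sq X, M.phi_add, aux_phi_neg, M.phi_smul, M.phi_xi, smul_zero, add_zero] at h1
  -- h1 : -(M.phi X) = -(M.phi X) + M.eta (M.phi X) • M.xi
  have h2 : M.eta (M.phi X) • M.xi = 0 := (left_eq_add.mp h1)
  have h3 := congrArg M.eta h2
  rw [M.eta_smul, M.eta_xi, mul_one, aux_eta_zero] at h3
  exact h3

lemma aux_g_phi_xi (X : V) : M.g (M.phi X) M.xi = 0 := by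
  rw [← M.eta_eq]; exact aux_eta_phi M X

lemma aux_g_xi_phi (X : V) : M.g M.xi (M.phi X) = 0 := by
  rw [M.g_symm]; exact aux_g_phi_xi M X

lemma aux_g_xi_xi : M.g M.xi M.xi = 1 := by
  rw [← M.eta_eq, M.eta_xi]

lemma aux_phi_skew (X Y : V) : M.g (M.phi X) Y = -(M.g X (M.phi Y)) := by
  have h := M.phi_compat X (M.phi Y)
  rw [aux_eta_phi, mul_zero, sub_zero, M.phi_sq Y, aux_g_add_right, aux_g_neg_right,
    aux_g_smul_right, aux_g_phi_xi, mul_zero, add_zero] at h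
  linear_combination -h

lemma aux_bracket_conn0 (X Y : V) : M.bracket X Y = M.conn0 X Y - M.conn0 Y X :=
  (M.conn0_torsion_free X Y).symm

lemma aux_bracket_conn (X Y : V) : M.bracket X Y = M.conn X Y - M.conn Y X :=
  (M.conn_torsion_free X Y).symm

lemma aux_bracket_connD (X Y : V) : M.bracket X Y = M.connD X Y - M.connD Y X :=
  (M.connD_torsion_free X Y).symm

lemma aux_bracket_antisymm (X Y : V) : M.bracket Y X = -(M.bracket X Y) := by
  rw [aux_bracket_conn0, aux_bracket_conn0 M X Y, neg_sub]

lemma aux_A0_selfadj (X Y : V) : M.g (M.conn0 X M.xi) Y = M.g (M.conn0 Y M.xi) X := by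
  have h := M.eta_closed X Y
  simp only [M.eta_eq] at h
  rw [M.conn0_metric Y M.xi X, M.conn0_metric X M.xi Y, aux_bracket_conn0,
    aux_g_sub_left] at h
  have s1 := M.g_symm Y (M.conn0 X M.xi)
  have s2 := M.g_symm X (M.conn0 Y M.xi)
  linear_combination h - s1 + s2

lemma aux_eta_bracket_xi_phi (Y : V) : M.eta (M.bracket M.xi (M.phi Y)) = 0 := by
  have h := M.eta_closed M.xi (M.phi Y)
  rw [aux_eta_phi, aux_D_zero, M.eta_xi, aux_D_one] at h
  linear_combination -h

lemma aux_N_skew (X Y : V) :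
    M.g (M.conn0 M.xi (M.phi X) - M.phi (M.conn0 M.xi X)) Y
      + M.g (M.conn0 M.xi (M.phi Y) - M.phi (M.conn0 M.xi Y)) X = 0 := by
  have hf : M.g (M.phi X) Y + M.g X (M.phi Y) = 0 := by
    rw [aux_phi_skew]; ring
  have h : M.D M.xi (M.g (M.phi X) Y) + M.D M.xi (M.g X (M.phi Y)) = 0 := by
    rw [← M.D_add_right, hf, aux_D_zero]
  rw [M.conn0_metric (M.phi X) Y M.xi, M.conn0_metric X (M.phi Y) M.xi] at h
  rw [aux_g_sub_left, aux_g_sub_left]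
  have e1 := aux_phi_skew M X (M.conn0 M.xi Y)
  -- g(phiX)(conn0 xi Y) = -(g X (phi (conn0 xi Y)))
  have e2 := aux_phi_skew M (M.conn0 M.xi X) Y
  -- g(phi(conn0 xi X)) Y = -(g (conn0 xi X) (phi Y))
  have s1 := M.g_symm X (M.conn0 M.xi (M.phi Y))
  have s2 := M.g_symm X (M.phi (M.conn0 M.xi Y))
  linear_combination h - e1 - e2 - s1 + s2

lemma aux_gphiphi (X Y : V) : M.g (M.phi (M.phi X)) (M.phi Y) = M.g (M.phi X) Y := by
  rw [M.phi_sq X, M.g_add_left, aux_g_neg_left, M.g_smul_left, aux_g_xi_phi, mul_zero,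
    add_zero, aux_phi_skew]

lemma aux_gphiphi_xi (Y : V) : M.g (M.phi (M.phi Y)) M.xi = 0 := by
  rw [M.phi_sq Y, M.g_add_left, aux_g_neg_left, M.g_smul_left, aux_g_xi_xi, mul_one,
    ← M.eta_eq, neg_add_cancel]

lemma aux_hL (X Y : V) :
    M.g (M.bracket M.xi (M.phi X) - M.phi (M.bracket M.xi X)) Y
      = M.g (M.bracket M.xi (M.phi Y) - M.phi (M.bracket M.xi Y)) X := by
  have p1 := M.phi_form_closed M.xi (M.phi X) (M.phi Y)
  have p2 := M.phi_form_closed M.xi X Y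
  rw [aux_gphiphi, aux_gphiphi_xi, aux_D_zero, M.phi_xi, aux_g_zero_left, aux_D_zero,
    aux_bracket_antisymm M M.xi (M.phi Y), aux_phi_neg, aux_g_neg_left] at p1
  -- remaining in p1 : compat rewrites for g (phi [xi,phiX]) (phiY) and g (phi [xi,phiY]) (phiX)
  have c1 := M.phi_compat (M.bracket M.xi (M.phi X)) Y
  have c2 := M.phi_compat (M.bracket M.xi (M.phi Y)) X
  rw [aux_eta_bracket_xi_phi, zero_mul, sub_zero] at c1
  rw [aux_eta_bracket_xi_phi, zero_mul, sub_zero] at c2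
  have e5 := aux_g_phi_xi M (M.bracket (M.phi X) (M.phi Y))
  rw [aux_g_phi_xi, aux_D_zero, M.phi_xi, aux_g_zero_left, aux_D_zero,
    aux_bracket_antisymm M M.xi Y, aux_phi_neg, aux_g_neg_left,
    aux_g_phi_xi] at p2
  rw [aux_g_sub_left, aux_g_sub_left]
  linear_combination -p1 + p2 - c1 + c2 - e5

lemma aux_half (x : F) (h : x + x = 0) : x = 0 := by
  have h2 : (2:ℝ) • x = 0 := by rw [two_smul]; exact h
  have h3 : ((2:ℝ)⁻¹ * 2) • x = 0 := by rw [mul_smul, h2, smul_zero]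
  rwa [inv_mul_cancel₀ (by norm_num : (2:ℝ) ≠ 0), one_smul] at h3

lemma aux_B_selfadj (Z W : V) :
    M.g (M.phi (M.conn0 Z M.xi) - M.conn0 (M.phi Z) M.xi) W
      = M.g (M.phi (M.conn0 W M.xi) - M.conn0 (M.phi W) M.xi) Z := by
  rw [aux_g_sub_left, aux_g_sub_left]
  have f1 := aux_phi_skew M (M.conn0 Z M.xi) W
  have f2 := aux_A0_selfadj M Z (M.phi W)
  have f3 := aux_A0_selfadj M (M.phi Z) W
  have f4 := aux_phi_skew M (M.conn0 W M.xi) Z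
  have f2' : M.g (M.conn0 Z M.xi) (M.phi W) = M.g (M.conn0 (M.phi W) M.xi) Z := by
    rw [M.g_symm, aux_A0_selfadj M (M.phi W) Z, M.g_symm]
  linear_combination f1 - f2' - f3 - f4

lemma aux_N_zero (X : V) : M.conn0 M.xi (M.phi X) = M.phi (M.conn0 M.xi X) := by
  have key : ∀ Y, M.g (M.conn0 M.xi (M.phi X) - M.phi (M.conn0 M.xi X)) Y = 0 := by
    intro Y
    have hdec : ∀ Z : V, M.bracket M.xi (M.phi Z) - M.phi (M.bracket M.xi Z)
        = (M.conn0 M.xi (M.phi Z) - M.phi (M.conn0 M.xi Z))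
          + (M.phi (M.conn0 Z M.xi) - M.conn0 (M.phi Z) M.xi) := by
      intro Z
      rw [aux_bracket_conn0, aux_bracket_conn0, aux_phi_sub]
      abel
    have hl := aux_hL M X Y
    rw [hdec X, hdec Y, M.g_add_left, M.g_add_left] at hl
    have hs := aux_N_skew M X Y
    have hb := aux_B_selfadj M X Y
    exact aux_half _ (by linear_combination hl - hb + hs)
  have h0 := M.g_nondeg _ key
  exact sub_eq_zero.mp h0

lemma aux_K_sym (X Y : V) : M.K X Y = M.K Y X := by
  have h1 : M.conn X Y = M.bracket X Y + M.conn Y X :=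
    eq_add_of_sub_eq (M.conn_torsion_free X Y)
  have h2 : M.conn0 X Y = M.bracket X Y + M.conn0 Y X :=
    eq_add_of_sub_eq (M.conn0_torsion_free X Y)
  simp only [AlmostContactMetricStatManifold.K]
  rw [h1, h2]
  abel

lemma aux_KS_sym (X Y : V) : KS M X Y = KS M Y X := by
  have h1 : M.connD X Y = M.bracket X Y + M.connD Y X :=
    eq_add_of_sub_eq (M.connD_torsion_free X Y)
  have h2 : M.conn0 X Y = M.bracket X Y + M.conn0 Y X :=
    eq_add_of_sub_eq (M.conn0_torsion_free X Y)
  simp only [KS]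
  rw [h1, h2]
  abel

lemma aux_dualK (X Y Z : V) : M.g (M.K X Y) Z + M.g Y (KS M X Z) = 0 := by
  have h1 := M.duality Y Z X
  have h2 := M.conn0_metric Y Z X
  simp only [AlmostContactMetricStatManifold.K, KS]
  rw [aux_g_sub_left, aux_g_sub_right]
  linear_combination h2 - h1

lemma aux_C_cycle (X Y Z : V) : M.g (M.K X Y) Z = M.g (M.K Y Z) X := by
  have h1 := aux_dualK M X Y Z
  have h2 := aux_dualK M Z Y X
  have e1 : M.g Y (KS M X Z) = M.g Y (KS M Z X) := by rw [aux_KS_sym]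
  have e2 : M.g (M.K Z Y) X = M.g (M.K Y Z) X := by rw [aux_K_sym]
  linear_combination h1 - h2 - e1 + e2

lemma aux_C_sym23 (X Y Z : V) : M.g (M.K X Y) Z = M.g (M.K X Z) Y := by
  rw [aux_C_cycle M X Y Z, aux_C_cycle M Y Z X, aux_K_sym M Z X]

lemma aux_KS_xi (W : V) : KS M M.xi W = -(M.K M.xi W) := by
  have key : ∀ U, M.g (KS M M.xi W + M.K M.xi W) U = 0 := by
    intro U
    rw [M.g_add_left]
    have h1 := aux_dualK M M.xi U W
    have h2 := aux_C_sym23 M M.xi U W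
    have h3 := M.g_symm (KS M M.xi W) U
    linear_combination h1 + h3 - h2
  have h0 := M.g_nondeg _ key
  exact eq_neg_of_add_eq_zero_left h0

lemma aux_stmt3 (X : V) :
    M.h0 X = M.h X + ((2 : ℝ)⁻¹) • (M.K M.xi (M.phi X) - M.phi (M.K M.xi X)) := by
  have hv : M.bracket M.xi (M.phi X) - M.phi (M.bracket M.xi X)
      = (M.A (M.phi X) - M.phi (M.A X))
        + (M.K M.xi (M.phi X) - M.phi (M.K M.xi X)) := by
    simp only [AlmostContactMetricStatManifold.A, AlmostContactMetricStatManifold.K]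
    rw [aux_bracket_conn, aux_bracket_conn, aux_N_zero]
    simp only [aux_phi_sub, aux_phi_neg]
    abel
  simp only [AlmostCosymplecticStatManifold.h0, AlmostCosymplecticStatManifold.h]
  rw [hv, smul_add]

lemma aux_stmt4 (X : V) :
    M.h0 X = M.hStar X - ((2 : ℝ)⁻¹) • (M.K M.xi (M.phi X) - M.phi (M.K M.xi X)) := by
  have e : ∀ W : V, M.connD M.xi W = KS M M.xi W + M.conn0 M.xi W := by
    intro W; simp only [KS]; abel
  have hv : M.bracket M.xi (M.phi X) - M.phi (M.bracket M.xi X)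
      = (M.AStar (M.phi X) - M.phi (M.AStar X))
        - (M.K M.xi (M.phi X) - M.phi (M.K M.xi X)) := by
    simp only [AlmostContactMetricStatManifold.AStar]
    rw [aux_bracket_connD, aux_bracket_connD, e (M.phi X), e X, aux_KS_xi, aux_KS_xi,
      aux_N_zero]
    simp only [aux_phi_sub, aux_phi_neg, M.phi_add]
    abel
  simp only [AlmostCosymplecticStatManifold.h0, AlmostCosymplecticStatManifold.hStar]
  rw [hv, smul_sub]

lemma aux_Kphi_symm (X Y : V) :
    M.g (M.K M.xi (M.phi X) - M.phi (M.K M.xi X)) Y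
      = M.g X (M.K M.xi (M.phi Y) - M.phi (M.K M.xi Y)) := by
  rw [aux_g_sub_left, aux_g_sub_right]
  have a1 := aux_C_sym23 M M.xi (M.phi X) Y
  have a2 := aux_phi_skew M (M.K M.xi X) Y
  have a3 := M.g_symm X (M.K M.xi (M.phi Y))
  have a4 := aux_C_sym23 M M.xi (M.phi Y) X
  have a5 := M.g_symm X (M.phi (M.K M.xi Y))
  have a6 := aux_phi_skew M (M.K M.xi Y) X
  linear_combination a1 - a2 - a3 - a4 + a5 + a6

lemma aux_h0_symm (X Y : V) : M.g (M.h0 X) Y = M.g X (M.h0 Y) := by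
  simp only [AlmostCosymplecticStatManifold.h0]
  rw [aux_g_rsmul_left, aux_g_rsmul_right, aux_hL,
    M.g_symm X (M.bracket M.xi (M.phi Y) - M.phi (M.bracket M.xi Y))]

lemma aux_h_eq (X : V) :
    M.h X = M.h0 X - ((2 : ℝ)⁻¹) • (M.K M.xi (M.phi X) - M.phi (M.K M.xi X)) :=
  (eq_sub_of_add_eq (aux_stmt3 M X).symm)

lemma aux_hStar_eq (X : V) :
    M.hStar X = M.h0 X + ((2 : ℝ)⁻¹) • (M.K M.xi (M.phi X) - M.phi (M.K M.xi X)) :=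
  (eq_add_of_sub_eq (aux_stmt4 M X).symm)

end Aux

open AlmostContactMetricStatManifold in
/-- For an almost cosymplectic statistical manifold with
`h⁰ = (1/2) L_ξ φ`, `h = (1/2)(Aφ - φA)`, `h* = (1/2)(A*φ - φA*)`:
`g(hX, Y) = g(X, hY)`, `g(h*X, Y) = g(X, h*Y)`,
`h⁰X = hX + (1/2)(K_ξ φ)X` and `h⁰X = h*X - (1/2)(K_ξ φ)X`,
where `(K_ξ φ)X = K_ξ(φX) - φ(K_ξ X)`. -/
theorem almostCosymplectic_h_identities (M : AlmostCosymplecticStatManifold F V)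
    (X Y : V) :
    (M.g (M.h X) Y = M.g X (M.h Y))
    ∧ (M.g (M.hStar X) Y = M.g X (M.hStar Y))
    ∧ (M.h0 X = M.h X + ((2 : ℝ)⁻¹) • (M.K M.xi (M.phi X) - M.phi (M.K M.xi X)))
    ∧ (M.h0 X = M.hStar X - ((2 : ℝ)⁻¹) • (M.K M.xi (M.phi X) - M.phi (M.K M.xi X))) := by
  refine ⟨?_, ?_, aux_stmt3 M X, aux_stmt4 M X⟩
  · rw [aux_h_eq M X, aux_h_eq M Y, aux_g_sub_left, aux_g_sub_right,
      aux_g_rsmul_left, aux_g_rsmul_right, aux_h0_symm, aux_Kphi_symm]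
  · rw [aux_hStar_eq M X, aux_hStar_eq M Y, M.g_add_left, aux_g_add_right,
      aux_g_rsmul_left, aux_g_rsmul_right, aux_h0_symm, aux_Kphi_symm]
end

section
/- Let (M, g, φ, ξ, η, ∇, ∇*) be an almost cosymplectic statistical manifold with AX = -∇_X ξ, A*X = -∇*_X ξ, and let R⁰, R, R* denote the curvature tensors of ∇⁰, ∇, ∇* respectively. Then for all vector fields X, Y: 4 R⁰(X,Y)ξ = R(X,Y)ξ + R*(X,Y)ξ + (∇*_Y A)X - (∇*_X A)Y + (∇_Y A*)X - (∇_X A*)Y. -/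
variable {F V : Type*} [CommRing F] [Algebra ℝ F]
  [AddCommGroup V] [Module F V] [Module ℝ V] [IsScalarTower ℝ F V]

namespace StatisticalManifold

variable (M : StatisticalManifold F V)

lemma half_F {t : F} (h : t + t = 0) : t = 0 := by
  have h2 : (2:ℝ) • t = 0 := by rw [two_smul]; exact h
  calc t = ((2:ℝ)⁻¹ * 2) • t := by rw [show (2:ℝ)⁻¹ * 2 = 1 by norm_num, one_smul]
    _ = (2:ℝ)⁻¹ • ((2:ℝ) • t) := by rw [mul_smul]
    _ = 0 := by rw [h2, smul_zero]

lemma g_neg_left' (X Y : V) : M.g (-X) Y = -M.g X Y := by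
  rw [← neg_one_smul F X, M.g_smul_left]; ring

lemma g_sub_left (X Y Z : V) : M.g (X - Y) Z = M.g X Z - M.g Y Z := by
  rw [sub_eq_add_neg, M.g_add_left, M.g_neg_left', sub_eq_add_neg]

lemma g_add_right (X Y Z : V) : M.g X (Y + Z) = M.g X Y + M.g X Z := by
  rw [M.g_symm, M.g_add_left, M.g_symm Y, M.g_symm Z]

lemma D_one (X : V) : M.D X 1 = 0 := by
  have h := M.D_mul_right X 1 1
  simp only [one_mul] at h
  linear_combination -h

lemma D_zero (X : V) : M.D X 0 = 0 := by
  have h := M.D_add_right X 0 0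
  rw [add_zero] at h
  linear_combination -h

lemma D_neg_one (X : V) : M.D X (-1) = 0 := by
  have h := M.D_add_right X 1 (-1)
  rw [add_neg_cancel, M.D_zero, M.D_one] at h
  linear_combination -h

lemma conn_neg_right (X Y : V) : M.conn X (-Y) = -M.conn X Y := by
  rw [← neg_one_smul F Y, M.conn_leibniz, M.D_neg_one, zero_smul, zero_add, neg_one_smul]

lemma connD_neg_right (X Y : V) : M.connD X (-Y) = -M.connD X Y := by
  rw [← neg_one_smul F Y, M.connD_leibniz, M.D_neg_one, zero_smul, zero_add, neg_one_smul]

lemma conn_neg_left (X Y : V) : M.conn (-X) Y = -M.conn X Y := by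
  rw [← neg_one_smul F X, M.conn_smul_left, neg_one_smul]

lemma connD_neg_left (X Y : V) : M.connD (-X) Y = -M.connD X Y := by
  rw [← neg_one_smul F X, M.connD_smul_left, neg_one_smul]

lemma conn_sub_left (X Y Z : V) : M.conn (X - Y) Z = M.conn X Z - M.conn Y Z := by
  rw [sub_eq_add_neg, M.conn_add_left, M.conn_neg_left, sub_eq_add_neg]

lemma connD_sub_left (X Y Z : V) : M.connD (X - Y) Z = M.connD X Z - M.connD Y Z := by
  rw [sub_eq_add_neg, M.connD_add_left, M.connD_neg_left, sub_eq_add_neg]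

/-- The auxiliary tensor `∇ + ∇* - 2∇⁰`. -/
def Del (X Y : V) : V :=
  M.conn X Y + M.connD X Y - (M.conn0 X Y + M.conn0 X Y)

lemma Del_symm (X Y : V) : M.Del X Y = M.Del Y X := by
  have h1 := M.conn_torsion_free X Y
  have h2 := M.connD_torsion_free X Y
  have h3 := M.conn0_torsion_free X Y
  have key : M.Del X Y - M.Del Y X =
      (M.conn X Y - M.conn Y X) + (M.connD X Y - M.connD Y X)
        - ((M.conn0 X Y - M.conn0 Y X) + (M.conn0 X Y - M.conn0 Y X)) := by
    simp only [Del]; abel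
  rw [h1, h2, h3] at key
  have h0 : M.Del X Y - M.Del Y X = 0 := by rw [key]; abel
  exact sub_eq_zero.mp h0

lemma Del_skew (X Y Z : V) : M.g (M.Del X Y) Z + M.g (M.Del X Z) Y = 0 := by
  have d1 := M.duality Y Z X
  have d2 := M.duality Z Y X
  have m1 := M.conn0_metric Y Z X
  have m2 := M.conn0_metric Z Y X
  have e1 : M.g (M.Del X Y) Z
      = M.g (M.conn X Y) Z + M.g (M.connD X Y) Z
        - (M.g (M.conn0 X Y) Z + M.g (M.conn0 X Y) Z) := by
    simp only [Del]
    rw [M.g_sub_left, M.g_add_left, M.g_add_left]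
  have e2 : M.g (M.Del X Z) Y
      = M.g (M.conn X Z) Y + M.g (M.connD X Z) Y
        - (M.g (M.conn0 X Z) Y + M.g (M.conn0 X Z) Y) := by
    simp only [Del]
    rw [M.g_sub_left, M.g_add_left, M.g_add_left]
  have s1 := M.g_symm (M.connD X Y) Z
  have s2 := M.g_symm (M.connD X Z) Y
  have s3 := M.g_symm Y (M.conn0 X Z)
  have s4 := M.g_symm Z (M.conn0 X Y)
  rw [e1, e2]
  linear_combination -d1 - d2 + m1 + m2 + s1 + s2 + s3 + s4

lemma Del_eq_zero (X Y : V) : M.Del X Y = 0 := by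
  apply M.g_nondeg
  intro Z
  apply half_F
  have a1 := M.Del_skew X Y Z
  have a2 := M.Del_skew Z X Y
  have a3 := M.Del_skew Y Z X
  have b1 : M.g (M.Del X Z) Y = M.g (M.Del Z X) Y := by rw [M.Del_symm]
  have b2 : M.g (M.Del Z Y) X = M.g (M.Del Y Z) X := by rw [M.Del_symm]
  have b3 : M.g (M.Del Y X) Z = M.g (M.Del X Y) Z := by rw [M.Del_symm]
  linear_combination a1 - a2 + a3 - b1 + b2 - b3

lemma sum_conn (X Y : V) :
    M.conn X Y + M.connD X Y = M.conn0 X Y + M.conn0 X Y := by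
  have h := M.Del_eq_zero X Y
  have h2 : M.conn X Y + M.connD X Y - (M.conn0 X Y + M.conn0 X Y) = 0 := h
  exact sub_eq_zero.mp h2

end StatisticalManifold

open AlmostContactMetricStatManifold in
/-- For an almost cosymplectic statistical manifold with curvature
tensors `R⁰`, `R`, `R*` of `∇⁰`, `∇`, `∇*`:
`4 R⁰(X,Y)ξ = R(X,Y)ξ + R*(X,Y)ξ + (∇*_Y A)X - (∇*_X A)Y + (∇_Y A*)X - (∇_X A*)Y`. -/
theorem almostCosymplectic_curvature_xi_sum (M : AlmostCosymplecticStatManifold F V)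
    (X Y : V) :
    (4 : ℝ) • M.curv M.conn0 X Y M.xi
      = M.curv M.conn X Y M.xi + M.curv M.connD X Y M.xi
        + (M.connD Y (M.A X) - M.A (M.connD Y X))
        - (M.connD X (M.A Y) - M.A (M.connD X Y))
        + (M.conn Y (M.AStar X) - M.AStar (M.conn Y X))
        - (M.conn X (M.AStar Y) - M.AStar (M.conn X Y)) := by
  have hs := M.toStatisticalManifold.sum_conn
  set ξ := M.xi with hξ
  simp only [AlmostContactMetricStatManifold.curv, AlmostContactMetricStatManifold.A,
    AlmostContactMetricStatManifold.AStar]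
  have e4 : ∀ v : V, (4:ℝ) • v = v + v + (v + v) := by
    intro v
    rw [show (4:ℝ) = 2 + 2 by norm_num, add_smul, two_smul]
  have T1 : ∀ U W : V, (4:ℝ) • M.conn0 U (M.conn0 W ξ)
      = M.conn U (M.conn W ξ) + M.conn U (M.connD W ξ)
        + (M.connD U (M.conn W ξ) + M.connD U (M.connD W ξ)) := by
    intro U W
    calc (4:ℝ) • M.conn0 U (M.conn0 W ξ)
        = M.conn0 U (M.conn0 W ξ) + M.conn0 U (M.conn0 W ξ)
          + (M.conn0 U (M.conn0 W ξ) + M.conn0 U (M.conn0 W ξ)) := e4 _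
      _ = M.conn0 U (M.conn0 W ξ + M.conn0 W ξ) + M.conn0 U (M.conn0 W ξ + M.conn0 W ξ) := by
          rw [M.conn0_add_right]
      _ = M.conn0 U (M.conn W ξ + M.connD W ξ) + M.conn0 U (M.conn W ξ + M.connD W ξ) := by
          rw [hs W ξ]
      _ = M.conn U (M.conn W ξ + M.connD W ξ) + M.connD U (M.conn W ξ + M.connD W ξ) :=
          (hs U _).symm
      _ = M.conn U (M.conn W ξ) + M.conn U (M.connD W ξ)
          + (M.connD U (M.conn W ξ) + M.connD U (M.connD W ξ)) := by
          rw [M.conn_add_right, M.connD_add_right]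
  have T3 : (4:ℝ) • M.conn0 (M.bracket X Y) ξ
      = M.conn (M.bracket X Y) ξ + M.connD (M.bracket X Y) ξ
        + (M.conn (M.bracket X Y) ξ + M.connD (M.bracket X Y) ξ) := by
    rw [e4, hs]
  have htf1 : M.conn (M.connD Y X) ξ
      = M.conn (M.connD X Y) ξ - M.conn (M.bracket X Y) ξ := by
    have h := M.connD_torsion_free X Y
    have h2 : M.connD Y X = M.connD X Y - M.bracket X Y := by
      rw [← h]; abel
    rw [h2, M.toStatisticalManifold.conn_sub_left]
  have htf2 : M.connD (M.conn Y X) ξ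
      = M.connD (M.conn X Y) ξ - M.connD (M.bracket X Y) ξ := by
    have h := M.conn_torsion_free X Y
    have h2 : M.conn Y X = M.conn X Y - M.bracket X Y := by
      rw [← h]; abel
    rw [h2, M.toStatisticalManifold.connD_sub_left]
  rw [smul_sub, smul_sub, T1 X Y, T1 Y X, T3,
    M.toStatisticalManifold.connD_neg_right, M.toStatisticalManifold.connD_neg_right,
    M.toStatisticalManifold.conn_neg_right, M.toStatisticalManifold.conn_neg_right,
    htf1, htf2]
  abel
end

section
/- Let (M, g, φ, ξ, η, ∇, ∇*) be an almost cosymplectic statistical manifold with AX = -∇_X ξ, A*X = -∇*_X ξ, difference tensor K, and curvature tensors R, R* of ∇, ∇*. Assume K_ξ φ = 0 and Aξ = 0. Then for all vector fields X: R(X,ξ)ξ - φR(φX,ξ)ξ + R*(X,ξ)ξ - φR*(φX,ξ)ξ = -2(A² + (A*)²)X, and for the Ricci tensors S, S* of ∇, ∇*: S(ξ,ξ) + S*(ξ,ξ) = -tr(A² + (A*)²). -/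
variable {F V : Type*} [CommRing F] [Algebra ℝ F]
  [AddCommGroup V] [Module F V] [Module ℝ V] [IsScalarTower ℝ F V]

/-- An almost cosymplectic statistical manifold equipped with a trace operator on
`(1,1)`-tensor fields (pointwise trace of fields of endomorphisms), used to define
the Ricci tensors `S(Y,Z) = tr (X ↦ R(X,Y)Z)`. -/
structure AlmostCosymplecticStatManifoldWithTrace (F V : Type*) [CommRing F] [Algebra ℝ F]
    [AddCommGroup V] [Module F V] [Module ℝ V] [IsScalarTower ℝ F V]
    extends AlmostCosymplecticStatManifold F V where
  /-- the (pointwise) trace of a `(1,1)`-tensor field -/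
  tr : (V → V) → F
  tr_add : ∀ f₁ f₂ : V → V, tr (fun X => f₁ X + f₂ X) = tr f₁ + tr f₂
  tr_neg : ∀ f : V → V, tr (fun X => -(f X)) = - tr f
  tr_smul : ∀ (a : F) (f : V → V), tr (fun X => a • f X) = a * tr f
  tr_comp_comm : ∀ f₁ f₂ : V → V, tr (f₁ ∘ f₂) = tr (f₂ ∘ f₁)

namespace AlmostCosymplecticStatManifoldWithTrace

variable {F V : Type*} [CommRing F] [Algebra ℝ F]
  [AddCommGroup V] [Module F V] [Module ℝ V] [IsScalarTower ℝ F V]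

open AlmostContactMetricStatManifold

/-- The Ricci tensor of an affine connection `Dc`: `S(Y,Z) = tr (X ↦ R(X,Y)Z)`. -/
def ricci (M : AlmostCosymplecticStatManifoldWithTrace F V) (Dc : V → V → V) (Y Z : V) : F :=
  M.tr (fun X => M.curv Dc X Y Z)

end AlmostCosymplecticStatManifoldWithTrace

namespace s19

open AlmostContactMetricStatManifold

lemma half_cancel {W : Type*} [AddCommGroup W] [Module ℝ W] {a : W} (h : a + a = 0) : a = 0 := by
  have h2 : (2:ℝ) • a = 0 := by rw [two_smul]; exact h
  have h3 := congrArg (fun x : W => ((2:ℝ)⁻¹) • x) h2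
  simp only [smul_smul] at h3
  norm_num at h3
  exact h3

variable {F V : Type*} [CommRing F] [Algebra ℝ F]
  [AddCommGroup V] [Module F V] [Module ℝ V] [IsScalarTower ℝ F V]
  (M : AlmostCosymplecticStatManifoldWithTrace F V)

lemma D_zero (X : V) : M.D X 0 = 0 := by
  have h := M.D_add_right X 0 0
  rw [add_zero] at h
  linear_combination -h

lemma D_one (X : V) : M.D X 1 = 0 := by
  have h := M.D_mul_right X 1 1
  simp only [mul_one, one_mul] at h
  linear_combination -h

lemma D_neg_one (X : V) : M.D X (-1 : F) = 0 := by
  have h := M.D_add_right X 1 (-1)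
  rw [add_neg_cancel, D_zero, D_one] at h
  linear_combination -h

lemma g_add_right (X Y Z : V) : M.g X (Y + Z) = M.g X Y + M.g X Z := by
  rw [M.g_symm, M.g_add_left, M.g_symm Y X, M.g_symm Z X]

lemma g_smul_right (a : F) (X Y : V) : M.g X (a • Y) = a * M.g X Y := by
  rw [M.g_symm, M.g_smul_left, M.g_symm Y X]

lemma g_zero_left (Y : V) : M.g 0 Y = 0 := by
  have h := M.g_add_left 0 0 Y
  rw [add_zero] at h
  linear_combination -h

lemma g_zero_right (X : V) : M.g X 0 = 0 := by rw [M.g_symm, g_zero_left]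

lemma g_neg_left (X Y : V) : M.g (-X) Y = -(M.g X Y) := by
  have h := M.g_add_left X (-X) Y
  rw [add_neg_cancel, g_zero_left] at h
  linear_combination -h

lemma g_neg_right (X Y : V) : M.g X (-Y) = -(M.g X Y) := by
  rw [M.g_symm, g_neg_left, M.g_symm Y X]

lemma g_sub_left (X Y Z : V) : M.g (X - Y) Z = M.g X Z - M.g Y Z := by
  rw [sub_eq_add_neg, M.g_add_left, g_neg_left, sub_eq_add_neg]

lemma g_sub_right (X Y Z : V) : M.g X (Y - Z) = M.g X Y - M.g X Z := by
  rw [M.g_symm, g_sub_left, M.g_symm Y X, M.g_symm Z X]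

section connlike

variable (Dc : V → V → V)

lemma conn_like_zero_right
    (hl : ∀ (a : F) (X Y : V), Dc X (a • Y) = M.D X a • Y + a • Dc X Y) (X : V) :
    Dc X 0 = 0 := by
  have h := hl 0 X 0
  rw [D_zero] at h
  simp only [zero_smul, smul_zero, add_zero, zero_add] at h
  exact h

lemma conn_like_neg_right
    (hl : ∀ (a : F) (X Y : V), Dc X (a • Y) = M.D X a • Y + a • Dc X Y) (X Y : V) :
    Dc X (-Y) = -(Dc X Y) := by
  have h := hl (-1) X Y
  rw [neg_one_smul, D_neg_one, zero_smul, zero_add, neg_one_smul] at h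
  exact h

lemma conn_like_sub_right
    (ha : ∀ X Y Z : V, Dc X (Y + Z) = Dc X Y + Dc X Z)
    (hl : ∀ (a : F) (X Y : V), Dc X (a • Y) = M.D X a • Y + a • Dc X Y) (X Y Z : V) :
    Dc X (Y - Z) = Dc X Y - Dc X Z := by
  rw [sub_eq_add_neg, ha, conn_like_neg_right M Dc hl, sub_eq_add_neg]

lemma conn_like_neg_left' {F V : Type*} [CommRing F] [Algebra ℝ F]
    [AddCommGroup V] [Module F V] [Module ℝ V] [IsScalarTower ℝ F V] (Dd : V → V → V)
    (hs : ∀ (a : F) (X Y : V), Dd (a • X) Y = a • Dd X Y) (X Y : V) :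
    Dd (-X) Y = -(Dd X Y) := by
  have h := hs (-1) X Y
  rw [neg_one_smul, neg_one_smul] at h
  exact h

lemma conn_like_sub_left' {F V : Type*} [CommRing F] [Algebra ℝ F]
    [AddCommGroup V] [Module F V] [Module ℝ V] [IsScalarTower ℝ F V] (Dd : V → V → V)
    (ha : ∀ X Y Z : V, Dd (X + Y) Z = Dd X Z + Dd Y Z)
    (hs : ∀ (a : F) (X Y : V), Dd (a • X) Y = a • Dd X Y) (X Y Z : V) :
    Dd (X - Y) Z = Dd X Z - Dd Y Z := by
  rw [sub_eq_add_neg, ha, conn_like_neg_left' Dd hs, sub_eq_add_neg]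

end connlike

lemma conn_zero_right (X : V) : M.conn X 0 = 0 :=
  conn_like_zero_right M M.conn M.conn_leibniz X

lemma connD_zero_right (X : V) : M.connD X 0 = 0 :=
  conn_like_zero_right M M.connD M.connD_leibniz X

lemma conn0_neg_right (X Y : V) : M.conn0 X (-Y) = -(M.conn0 X Y) :=
  conn_like_neg_right M M.conn0 M.conn0_leibniz X Y

lemma conn_neg_left (X Y : V) : M.conn (-X) Y = -(M.conn X Y) :=
  conn_like_neg_left' M.conn M.conn_smul_left X Y

lemma connD_neg_left (X Y : V) : M.connD (-X) Y = -(M.connD X Y) :=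
  conn_like_neg_left' M.connD M.connD_smul_left X Y

lemma conn0_neg_left (X Y : V) : M.conn0 (-X) Y = -(M.conn0 X Y) :=
  conn_like_neg_left' M.conn0 M.conn0_smul_left X Y

lemma conn_sub_left (X Y Z : V) : M.conn (X - Y) Z = M.conn X Z - M.conn Y Z :=
  conn_like_sub_left' M.conn M.conn_add_left M.conn_smul_left X Y Z

lemma connD_sub_left (X Y Z : V) : M.connD (X - Y) Z = M.connD X Z - M.connD Y Z :=
  conn_like_sub_left' M.connD M.connD_add_left M.connD_smul_left X Y Z

lemma conn0_sub_left (X Y Z : V) : M.conn0 (X - Y) Z = M.conn0 X Z - M.conn0 Y Z :=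
  conn_like_sub_left' M.conn0 M.conn0_add_left M.conn0_smul_left X Y Z

lemma K_def (X Y : V) : M.K X Y = M.conn X Y - M.conn0 X Y := rfl

lemma conn_eq (X Y : V) : M.conn X Y = M.conn0 X Y + M.K X Y := by
  rw [K_def]; abel

lemma K_symm (X Y : V) : M.K X Y = M.K Y X := by
  have h1 := M.conn_torsion_free X Y
  have h2 := M.conn0_torsion_free X Y
  have h3 : M.conn X Y - M.conn Y X = M.conn0 X Y - M.conn0 Y X := h1.trans h2.symm
  rw [K_def, K_def, sub_eq_sub_iff_sub_eq_sub]
  exact h3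

lemma K_add_left (X Y Z : V) : M.K (X + Y) Z = M.K X Z + M.K Y Z := by
  rw [K_def, K_def, K_def, M.conn_add_left, M.conn0_add_left]; abel

lemma K_neg_left (X Y : V) : M.K (-X) Y = -(M.K X Y) := by
  rw [K_def, K_def, conn_neg_left, conn0_neg_left]; abel

lemma K_sub_left (X Y Z : V) : M.K (X - Y) Z = M.K X Z - M.K Y Z := by
  rw [K_def, K_def, K_def, conn_sub_left, conn0_sub_left]; abel

lemma gK_pair (Z X Y : V) :
    M.g (M.K Z X) Y = M.g X (M.conn0 Z Y - M.connD Z Y) := by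
  have hd := M.duality X Y Z
  have hm := M.conn0_metric X Y Z
  rw [K_def, g_sub_left, g_sub_right]
  linear_combination hm - hd

lemma Ks_symm (Z Y : V) :
    M.conn0 Z Y - M.connD Z Y = M.conn0 Y Z - M.connD Y Z := by
  have h1 := M.connD_torsion_free Z Y
  have h2 := M.conn0_torsion_free Z Y
  rw [sub_eq_sub_iff_sub_eq_sub]
  exact h2.trans h1.symm

lemma gK_sym (Z X Y : V) : M.g (M.K Z X) Y = M.g (M.K Z Y) X :=
  calc M.g (M.K Z X) Y = M.g X (M.conn0 Z Y - M.connD Z Y) := gK_pair M Z X Y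
    _ = M.g X (M.conn0 Y Z - M.connD Y Z) := by rw [Ks_symm]
    _ = M.g (M.K Y X) Z := (gK_pair M Y X Z).symm
    _ = M.g (M.K X Y) Z := by rw [K_symm M Y X]
    _ = M.g Y (M.conn0 X Z - M.connD X Z) := gK_pair M X Y Z
    _ = M.g Y (M.conn0 Z X - M.connD Z X) := by rw [Ks_symm]
    _ = M.g (M.K Z Y) X := (gK_pair M Z Y X).symm

lemma connD_eq (Z Y : V) : M.connD Z Y = M.conn0 Z Y - M.K Z Y := by
  rw [← sub_eq_zero]
  apply M.g_nondeg
  intro W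
  have h1 := gK_pair M Z W Y
  have h2 := gK_sym M Z W Y
  have hs1 : M.g W (M.conn0 Z Y - M.connD Z Y) =
      M.g (M.conn0 Z Y) W - M.g (M.connD Z Y) W := by
    rw [g_sub_right, M.g_symm W, M.g_symm W]
  rw [g_sub_left, g_sub_left]
  linear_combination h1 - h2 + hs1

lemma phi_zero : M.phi 0 = 0 := by
  have h := M.phi_add 0 0
  rw [add_zero] at h
  exact (left_eq_add.mp h)

lemma phi_neg (X : V) : M.phi (-X) = -(M.phi X) := by
  have h := M.phi_add X (-X)
  rw [add_neg_cancel, phi_zero] at h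
  exact (neg_eq_of_add_eq_zero_right h.symm).symm

lemma phi_sub (X Y : V) : M.phi (X - Y) = M.phi X - M.phi Y := by
  rw [sub_eq_add_neg, M.phi_add, phi_neg, sub_eq_add_neg]

lemma eta_zero : M.eta (0 : V) = 0 := by
  have h := M.eta_add 0 0
  rw [add_zero] at h
  linear_combination -h

lemma eta_phi (X : V) : M.eta (M.phi X) = 0 := by
  have h1 := M.phi_sq (M.phi X)
  have h2 : M.phi (M.phi (M.phi X)) = -(M.phi X) := by
    rw [M.phi_sq X, M.phi_add, phi_neg, M.phi_smul, M.phi_xi, smul_zero, add_zero]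
  have h3 : M.eta (M.phi X) • M.xi = 0 := by
    have h4 := h2.symm.trans h1
    exact (left_eq_add.mp h4)
  have h5 := congrArg M.eta h3
  rw [M.eta_smul, M.eta_xi, mul_one, eta_zero] at h5
  exact h5

lemma g_phi_xi (X : V) : M.g (M.phi X) M.xi = 0 := by
  rw [← M.eta_eq]; exact eta_phi M X

lemma g_xi_xi : M.g M.xi M.xi = 1 := by
  rw [← M.eta_eq, M.eta_xi]

lemma phi_skew (X Y : V) : M.g (M.phi X) Y = -(M.g X (M.phi Y)) := by
  have h := M.phi_compat X (M.phi Y)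
  rw [M.phi_sq Y, g_add_right, g_neg_right, g_smul_right, g_phi_xi, mul_zero,
    add_zero, eta_phi, mul_zero, sub_zero] at h
  linear_combination -h

lemma gB_xi (X : V) : M.g (M.conn0 X M.xi) M.xi = 0 := by
  have h := M.conn0_metric M.xi M.xi X
  rw [g_xi_xi, D_one] at h
  have hs : M.g M.xi (M.conn0 X M.xi) = M.g (M.conn0 X M.xi) M.xi := M.g_symm _ _
  apply half_cancel
  linear_combination -h - hs

lemma B_symm (X Y : V) : M.g Y (M.conn0 X M.xi) = M.g X (M.conn0 Y M.xi) := by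
  have h := M.eta_closed X Y
  simp only [M.eta_eq] at h
  rw [← M.conn0_torsion_free X Y, M.conn0_metric Y M.xi X, M.conn0_metric X M.xi Y,
    g_sub_left] at h
  linear_combination h

lemma B_xi : M.conn0 M.xi M.xi = 0 := by
  apply M.g_nondeg
  intro Y
  calc M.g (M.conn0 M.xi M.xi) Y = M.g Y (M.conn0 M.xi M.xi) := M.g_symm _ _
    _ = M.g M.xi (M.conn0 Y M.xi) := B_symm M M.xi Y
    _ = M.g (M.conn0 Y M.xi) M.xi := M.g_symm _ _
    _ = 0 := gB_xi M Y

lemma eq_of_abel {W : Type*} [AddCommGroup W] {a b e : W} (h : e = 0) (h2 : a - b = e) :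
    a = b := sub_eq_zero.mp (h2.trans h)

lemma C_plus (X : V) :
    ((M.conn0 M.xi (M.phi X) - M.phi (M.conn0 M.xi X)) + M.conn0 (M.phi X) M.xi)
      + M.phi (M.conn0 X M.xi) = 0 := by
  apply M.g_nondeg
  intro Y
  rw [M.g_add_left, M.g_add_left, g_sub_left]
  have h := M.phi_form_closed X Y M.xi
  rw [g_phi_xi M Y, D_zero, M.phi_xi, g_zero_left, D_zero,
    M.conn0_metric (M.phi X) Y M.xi, g_phi_xi M (M.bracket X Y),
    ← M.conn0_torsion_free Y M.xi, ← M.conn0_torsion_free M.xi X,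
    phi_sub, phi_sub, g_sub_left, g_sub_left] at h
  have s1 : M.g (M.phi X) (M.conn0 M.xi Y) = -(M.g (M.phi (M.conn0 M.xi Y)) X) := by
    rw [phi_skew, M.g_symm X]
  have s2 : M.g (M.phi (M.conn0 Y M.xi)) X = -(M.g (M.conn0 (M.phi X) M.xi) Y) := by
    rw [phi_skew, M.g_symm (M.conn0 Y M.xi) (M.phi X), B_symm M Y (M.phi X),
      M.g_symm Y]
  linear_combination h - s1 + s2

lemma C_eq (X : V) :
    M.conn0 M.xi (M.phi X)
      = M.phi (M.conn0 M.xi X) - M.conn0 (M.phi X) M.xi - M.phi (M.conn0 X M.xi) :=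
  eq_of_abel (C_plus M X) (by abel)

lemma eta_B (X : V) : M.eta (M.conn0 X M.xi) = 0 := by
  rw [M.eta_eq]; exact gB_xi M X

lemma b_phiphi (X : V) :
    M.conn0 (M.phi (M.phi X)) M.xi = -(M.conn0 X M.xi) := by
  rw [M.phi_sq X, M.conn0_add_left, conn0_neg_left, M.conn0_smul_left, B_xi,
    smul_zero, add_zero]

lemma nxi_phiphi (X : V) :
    M.conn0 M.xi (M.phi (M.phi X))
      = -(M.conn0 M.xi X) + (M.g (M.conn0 M.xi X) M.xi) • M.xi := by
  rw [M.phi_sq X, M.conn0_add_right, conn0_neg_right, M.conn0_leibniz, B_xi,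
    smul_zero, add_zero, M.eta_eq, M.conn0_metric X M.xi M.xi, B_xi, g_zero_right,
    add_zero]

lemma rel1a (X : V) :
    M.conn0 M.xi (M.phi (M.phi X)) - M.phi (M.conn0 M.xi (M.phi X))
      = M.conn0 X M.xi - M.phi (M.conn0 (M.phi X) M.xi) := by
  have h1 := C_eq M (M.phi X)
  rw [b_phiphi] at h1
  rw [h1]
  abel

lemma rel1b (X : V) :
    M.phi (M.conn0 M.xi (M.phi X) - M.phi (M.conn0 M.xi X))
      = M.conn0 X M.xi - M.phi (M.conn0 (M.phi X) M.xi) := by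
  rw [phi_sub, C_eq M X, phi_sub, phi_sub, M.phi_sq (M.conn0 X M.xi),
    eta_B, zero_smul, add_zero]
  abel

lemma rel1 (X : V) :
    M.conn0 M.xi (M.phi (M.phi X)) - M.phi (M.conn0 M.xi (M.phi X))
      = M.phi (M.conn0 M.xi (M.phi X) - M.phi (M.conn0 M.xi X)) :=
  (rel1a M X).trans (rel1b M X).symm

lemma rel2 (X : V) :
    (M.conn0 M.xi (M.phi (M.phi X)) - M.phi (M.conn0 M.xi (M.phi X)))
      + M.phi (M.conn0 M.xi (M.phi X) - M.phi (M.conn0 M.xi X)) = 0 := by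
  rw [phi_sub, M.phi_sq (M.conn0 M.xi X), M.eta_eq, nxi_phiphi]
  abel

lemma phi_c_zero (X : V) :
    M.phi (M.conn0 M.xi (M.phi X) - M.phi (M.conn0 M.xi X)) = 0 := by
  apply half_cancel
  have h1 := rel1 M X
  have h2 := rel2 M X
  rw [h1] at h2
  exact h2

lemma g_nxiphi_xi (X : V) : M.g (M.conn0 M.xi (M.phi X)) M.xi = 0 := by
  have h := M.conn0_metric (M.phi X) M.xi M.xi
  rw [g_phi_xi, D_zero, B_xi, g_zero_right, add_zero] at h
  exact h.symm

lemma c_zero (X : V) : M.conn0 M.xi (M.phi X) = M.phi (M.conn0 M.xi X) := by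
  have h2 : M.phi (M.phi (M.conn0 M.xi (M.phi X) - M.phi (M.conn0 M.xi X))) = 0 := by
    rw [phi_c_zero, phi_zero]
  rw [M.phi_sq] at h2
  have h3 : M.eta (M.conn0 M.xi (M.phi X) - M.phi (M.conn0 M.xi X)) = 0 := by
    rw [M.eta_eq, g_sub_left, g_nxiphi_xi, g_phi_xi]
    ring
  rw [h3, zero_smul, add_zero, neg_eq_zero] at h2
  exact sub_eq_zero.mp h2

lemma b_phi (X : V) : M.conn0 (M.phi X) M.xi = -(M.phi (M.conn0 X M.xi)) := by
  have h := C_eq M X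
  rw [c_zero] at h
  exact eq_of_abel (a := M.conn0 (M.phi X) M.xi) (b := -(M.phi (M.conn0 X M.xi)))
    (sub_eq_zero.mpr h) (by abel)

lemma connD_sub_right (X Y Z : V) : M.connD X (Y - Z) = M.connD X Y - M.connD X Z :=
  conn_like_sub_right M M.connD M.connD_add_right M.connD_leibniz X Y Z

lemma conn_xi_xi (hA : M.A M.xi = 0) : M.conn M.xi M.xi = 0 := by
  have h : -(M.conn M.xi M.xi) = 0 := hA
  exact neg_eq_zero.mp h

lemma K_xi_xi (hA : M.A M.xi = 0) : M.K M.xi M.xi = 0 := by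
  rw [K_def, conn_xi_xi M hA, B_xi, sub_zero]

lemma connD_xi_xi (hA : M.A M.xi = 0) : M.connD M.xi M.xi = 0 := by
  rw [connD_eq, K_xi_xi M hA, B_xi, sub_zero]

lemma Q_phi (hK : ∀ X : V, M.K M.xi (M.phi X) - M.phi (M.K M.xi X) = 0) (X : V) :
    M.K (M.phi X) M.xi = M.phi (M.K X M.xi) := by
  rw [K_symm M (M.phi X) M.xi, sub_eq_zero.mp (hK X), K_symm M X M.xi]

lemma g_QQ_xi (hA : M.A M.xi = 0) (X : V) :
    M.g (M.K (M.K X M.xi) M.xi) M.xi = 0 := by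
  rw [K_symm M (M.K X M.xi) M.xi, gK_sym M M.xi (M.K X M.xi) M.xi,
    K_xi_xi M hA, g_zero_left]

lemma g_BB_xi (X : V) : M.g (M.conn0 (M.conn0 X M.xi) M.xi) M.xi = 0 := by
  rw [M.g_symm, B_symm M (M.conn0 X M.xi) M.xi, B_xi, g_zero_right]

lemma g_NB_xi (X : V) : M.g (M.conn0 M.xi (M.conn0 X M.xi)) M.xi = 0 := by
  have h := M.conn0_metric (M.conn0 X M.xi) M.xi M.xi
  rw [gB_xi, D_zero, B_xi, g_zero_right, add_zero] at h
  exact h.symm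

lemma g_BN_xi (X : V) : M.g (M.conn0 (M.conn0 M.xi X) M.xi) M.xi = 0 := by
  rw [M.g_symm, B_symm M (M.conn0 M.xi X) M.xi, B_xi, g_zero_right]

lemma phiE (X : V) :
    M.phi (M.conn0 (M.conn0 M.xi (M.phi X)) M.xi - M.conn0 M.xi (M.conn0 (M.phi X) M.xi))
      = M.conn0 (M.conn0 M.xi X) M.xi - M.conn0 M.xi (M.conn0 X M.xi) := by
  rw [c_zero M X, b_phi M (M.conn0 M.xi X), b_phi M X, conn0_neg_right,
    c_zero M (M.conn0 X M.xi)]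
  rw [show -(M.phi (M.conn0 (M.conn0 M.xi X) M.xi))
        - -(M.phi (M.conn0 M.xi (M.conn0 X M.xi)))
      = M.phi (M.conn0 M.xi (M.conn0 X M.xi) - M.conn0 (M.conn0 M.xi X) M.xi) from by
    rw [phi_sub]; abel]
  rw [M.phi_sq, M.eta_eq, g_sub_left, g_NB_xi, g_BN_xi, sub_zero, zero_smul, add_zero]
  abel

lemma phiB2 (X : V) :
    M.phi (M.conn0 (M.conn0 (M.phi X) M.xi) M.xi)
      = -(M.conn0 (M.conn0 X M.xi) M.xi) := by
  rw [b_phi M X, conn0_neg_left, b_phi M (M.conn0 X M.xi), neg_neg, M.phi_sq,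
    M.eta_eq, g_BB_xi, zero_smul, add_zero]

lemma phiQ2 (hK : ∀ X : V, M.K M.xi (M.phi X) - M.phi (M.K M.xi X) = 0)
    (hA : M.A M.xi = 0) (X : V) :
    M.phi (M.K (M.K (M.phi X) M.xi) M.xi) = -(M.K (M.K X M.xi) M.xi) := by
  rw [Q_phi M hK X, Q_phi M hK (M.K X M.xi), M.phi_sq, M.eta_eq, g_QQ_xi M hA,
    zero_smul, add_zero]

lemma sum_curv (hA : M.A M.xi = 0) (X : V) :
    M.curv M.conn X M.xi M.xi + M.curv M.connD X M.xi M.xi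
      = ((M.conn0 (M.conn0 M.xi X) M.xi - M.conn0 M.xi (M.conn0 X M.xi))
          + (M.conn0 (M.conn0 M.xi X) M.xi - M.conn0 M.xi (M.conn0 X M.xi)))
        - (M.conn0 (M.conn0 X M.xi) M.xi + M.conn0 (M.conn0 X M.xi) M.xi)
        - (M.K (M.K X M.xi) M.xi + M.K (M.K X M.xi) M.xi) := by
  simp only [AlmostContactMetricStatManifold.curv]
  rw [conn_xi_xi M hA, connD_xi_xi M hA, conn_zero_right, connD_zero_right,
    ← M.conn0_torsion_free X M.xi]
  rw [conn_eq M X M.xi, connD_eq M X M.xi]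
  rw [M.conn_add_right, conn_eq M M.xi (M.conn0 X M.xi), conn_eq M M.xi (M.K X M.xi)]
  rw [connD_sub_right M, connD_eq M M.xi (M.conn0 X M.xi),
    connD_eq M M.xi (M.K X M.xi)]
  rw [conn_sub_left M, conn_eq M (M.conn0 X M.xi) M.xi,
    conn_eq M (M.conn0 M.xi X) M.xi]
  rw [connD_sub_left M, connD_eq M (M.conn0 X M.xi) M.xi,
    connD_eq M (M.conn0 M.xi X) M.xi]
  rw [K_symm M M.xi (M.K X M.xi)]
  abel

lemma AA_eq (X : V) :
    M.A (M.A X) + M.AStar (M.AStar X)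
      = ((M.conn0 (M.conn0 X M.xi) M.xi + M.K (M.K X M.xi) M.xi)
          + (M.conn0 (M.conn0 X M.xi) M.xi + M.K (M.K X M.xi) M.xi)) := by
  simp only [AlmostContactMetricStatManifold.A, AlmostContactMetricStatManifold.AStar]
  rw [conn_neg_left, neg_neg, connD_neg_left, neg_neg]
  rw [conn_eq M X M.xi, M.conn_add_left, conn_eq M (M.conn0 X M.xi) M.xi,
    conn_eq M (M.K X M.xi) M.xi]
  rw [connD_eq M X M.xi, connD_sub_left M, connD_eq M (M.conn0 X M.xi) M.xi,
    connD_eq M (M.K X M.xi) M.xi]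
  rw [K_symm M (M.K X M.xi) M.xi]
  abel

lemma trE_zero :
    M.tr (fun X => M.conn0 (M.conn0 M.xi X) M.xi - M.conn0 M.xi (M.conn0 X M.xi))
      = 0 := by
  have hb : M.tr (fun X => ((fun Y => M.conn0 Y M.xi) ∘ (fun Y => M.conn0 M.xi Y)) X
        + -(((fun Y => M.conn0 M.xi Y) ∘ (fun Y => M.conn0 Y M.xi)) X))
      = M.tr ((fun Y => M.conn0 Y M.xi) ∘ (fun Y => M.conn0 M.xi Y))
        + M.tr (fun X => -(((fun Y => M.conn0 M.xi Y) ∘ (fun Y => M.conn0 Y M.xi)) X)) :=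
    M.tr_add _ _
  have hc : M.tr (fun X => -(((fun Y => M.conn0 M.xi Y) ∘ (fun Y => M.conn0 Y M.xi)) X))
      = -(M.tr ((fun Y => M.conn0 M.xi Y) ∘ (fun Y => M.conn0 Y M.xi))) :=
    M.tr_neg _
  have hd := M.tr_comp_comm (fun Y => M.conn0 Y M.xi) (fun Y => M.conn0 M.xi Y)
  have ha : M.tr (fun X => M.conn0 (M.conn0 M.xi X) M.xi - M.conn0 M.xi (M.conn0 X M.xi))
      = M.tr (fun X => ((fun Y => M.conn0 Y M.xi) ∘ (fun Y => M.conn0 M.xi Y)) X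
        + -(((fun Y => M.conn0 M.xi Y) ∘ (fun Y => M.conn0 Y M.xi)) X)) := by
    congr 1
    funext X
    exact sub_eq_add_neg _ _
  rw [ha, hb, hc, hd]
  ring

end s19

open AlmostContactMetricStatManifold AlmostCosymplecticStatManifoldWithTrace in
/-- Let `M` be an almost cosymplectic statistical manifold with
`K_ξ φ = 0` and `Aξ = 0`.  Then for every vector field `X`:
`R(X,ξ)ξ - φR(φX,ξ)ξ + R*(X,ξ)ξ - φR*(φX,ξ)ξ = -2(A² + (A*)²)X`,
and for the Ricci tensors `S`, `S*` of `∇`, `∇*`: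
`S(ξ,ξ) + S*(ξ,ξ) = -tr(A² + (A*)²)`. -/
theorem almostCosymplectic_curvature_and_ricci
    (M : AlmostCosymplecticStatManifoldWithTrace F V)
    (hK : ∀ X : V, M.K M.xi (M.phi X) - M.phi (M.K M.xi X) = 0)
    (hA : M.A M.xi = 0) :
    (∀ X : V,
      M.curv M.conn X M.xi M.xi - M.phi (M.curv M.conn (M.phi X) M.xi M.xi)
        + M.curv M.connD X M.xi M.xi - M.phi (M.curv M.connD (M.phi X) M.xi M.xi)
      = -((2 : ℝ) • (M.A (M.A X) + M.AStar (M.AStar X))))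
    ∧ (M.ricci M.conn M.xi M.xi + M.ricci M.connD M.xi M.xi
        = - M.tr (fun X => M.A (M.A X) + M.AStar (M.AStar X))) := by
  constructor
  · intro X
    have hsX := s19.sum_curv M hA X
    have hsP := s19.sum_curv M hA (M.phi X)
    have key : M.phi
        (((M.conn0 (M.conn0 M.xi (M.phi X)) M.xi - M.conn0 M.xi (M.conn0 (M.phi X) M.xi))
            + (M.conn0 (M.conn0 M.xi (M.phi X)) M.xi - M.conn0 M.xi (M.conn0 (M.phi X) M.xi)))
          - (M.conn0 (M.conn0 (M.phi X) M.xi) M.xi + M.conn0 (M.conn0 (M.phi X) M.xi) M.xi)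
          - (M.K (M.K (M.phi X) M.xi) M.xi + M.K (M.K (M.phi X) M.xi) M.xi))
        = ((M.conn0 (M.conn0 M.xi X) M.xi - M.conn0 M.xi (M.conn0 X M.xi))
            + (M.conn0 (M.conn0 M.xi X) M.xi - M.conn0 M.xi (M.conn0 X M.xi)))
          + ((M.conn0 (M.conn0 X M.xi) M.xi + M.conn0 (M.conn0 X M.xi) M.xi)
            + (M.K (M.K X M.xi) M.xi + M.K (M.K X M.xi) M.xi)) := by
      rw [s19.phi_sub M, s19.phi_sub M, M.phi_add, M.phi_add, M.phi_add,
        s19.phiE M X, s19.phiB2 M X, s19.phiQ2 M hK hA X]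
      abel
    calc M.curv M.conn X M.xi M.xi - M.phi (M.curv M.conn (M.phi X) M.xi M.xi)
          + M.curv M.connD X M.xi M.xi - M.phi (M.curv M.connD (M.phi X) M.xi M.xi)
        = (M.curv M.conn X M.xi M.xi + M.curv M.connD X M.xi M.xi)
          - M.phi (M.curv M.conn (M.phi X) M.xi M.xi
            + M.curv M.connD (M.phi X) M.xi M.xi) := by
          rw [M.phi_add]; abel
      _ = -((2 : ℝ) • (M.A (M.A X) + M.AStar (M.AStar X))) := by
          rw [hsX, hsP, key, two_smul, s19.AA_eq M X]
          abel
  · simp only [AlmostCosymplecticStatManifoldWithTrace.ricci]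
    have A1 : M.tr (fun X => M.curv M.conn X M.xi M.xi + M.curv M.connD X M.xi M.xi)
        = M.tr (fun X => M.curv M.conn X M.xi M.xi)
          + M.tr (fun X => M.curv M.connD X M.xi M.xi) := M.tr_add _ _
    have A2 : M.tr (fun X => M.curv M.conn X M.xi M.xi + M.curv M.connD X M.xi M.xi)
        = M.tr (fun X =>
            ((M.conn0 (M.conn0 M.xi X) M.xi - M.conn0 M.xi (M.conn0 X M.xi))
              + (M.conn0 (M.conn0 M.xi X) M.xi - M.conn0 M.xi (M.conn0 X M.xi)))
            + -(((M.conn0 (M.conn0 X M.xi) M.xi + M.K (M.K X M.xi) M.xi)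
              + (M.conn0 (M.conn0 X M.xi) M.xi + M.K (M.K X M.xi) M.xi)))) := by
      congr 1
      funext X
      rw [s19.sum_curv M hA X]
      abel
    have A3 : M.tr (fun X =>
            ((M.conn0 (M.conn0 M.xi X) M.xi - M.conn0 M.xi (M.conn0 X M.xi))
              + (M.conn0 (M.conn0 M.xi X) M.xi - M.conn0 M.xi (M.conn0 X M.xi)))
            + -(((M.conn0 (M.conn0 X M.xi) M.xi + M.K (M.K X M.xi) M.xi)
              + (M.conn0 (M.conn0 X M.xi) M.xi + M.K (M.K X M.xi) M.xi))))
        = M.tr (fun X =>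
            (M.conn0 (M.conn0 M.xi X) M.xi - M.conn0 M.xi (M.conn0 X M.xi))
              + (M.conn0 (M.conn0 M.xi X) M.xi - M.conn0 M.xi (M.conn0 X M.xi)))
          + M.tr (fun X =>
            -(((M.conn0 (M.conn0 X M.xi) M.xi + M.K (M.K X M.xi) M.xi)
              + (M.conn0 (M.conn0 X M.xi) M.xi + M.K (M.K X M.xi) M.xi)))) :=
      M.tr_add _ _
    have A4 : M.tr (fun X =>
            (M.conn0 (M.conn0 M.xi X) M.xi - M.conn0 M.xi (M.conn0 X M.xi))
              + (M.conn0 (M.conn0 M.xi X) M.xi - M.conn0 M.xi (M.conn0 X M.xi)))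
        = M.tr (fun X => M.conn0 (M.conn0 M.xi X) M.xi - M.conn0 M.xi (M.conn0 X M.xi))
          + M.tr (fun X => M.conn0 (M.conn0 M.xi X) M.xi - M.conn0 M.xi (M.conn0 X M.xi)) :=
      M.tr_add _ _
    have A5 : M.tr (fun X =>
            -(((M.conn0 (M.conn0 X M.xi) M.xi + M.K (M.K X M.xi) M.xi)
              + (M.conn0 (M.conn0 X M.xi) M.xi + M.K (M.K X M.xi) M.xi))))
        = -(M.tr (fun X =>
            ((M.conn0 (M.conn0 X M.xi) M.xi + M.K (M.K X M.xi) M.xi)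
              + (M.conn0 (M.conn0 X M.xi) M.xi + M.K (M.K X M.xi) M.xi)))) :=
      M.tr_neg _
    have A6 := s19.trE_zero M
    have A7 : M.tr (fun X => M.A (M.A X) + M.AStar (M.AStar X))
        = M.tr (fun X =>
            ((M.conn0 (M.conn0 X M.xi) M.xi + M.K (M.K X M.xi) M.xi)
              + (M.conn0 (M.conn0 X M.xi) M.xi + M.K (M.K X M.xi) M.xi))) := by
      congr 1
      funext X
      exact s19.AA_eq M X
    linear_combination -A1 + A2 + A3 + A4 + A5 + 2 * A6 + A7
end
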